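/- arXiv:2412.11151 — 8 statements merged into one kernel-verified Lean document; each statement's English description precedes it below -/
import Mathlib

section
/- Let t be a positive natural number and let k be an integer with 1 ≤ k ≤ t. Then for every i ∈ {0,…,t}, the i-th entry of the matrix-vector product K_t^+ v_k equals σ_k^+ · (u_k^+)_i; that is, K_t^+ v_k = σ_k^+ u_k^+. -/
open Real Matrix

/-- The `(t+1) × t` convolution matrix `K_t^+` with kernel `[1, 1]ᵀ`. -/
noncomputable def Kplus (t : ℕ) : Matrix (Fin (t + 1)) (Fin t) ℝ :=
  fun i j => if (i : ℕ) = (j : ℕ) then 1 else if (i : ℕ) = (j : ℕ) + 1 then 1 else 0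

/-- The DST vector `v_k`, `(v_k)_j = sin(kπ(j+1)/(t+1))`. -/
noncomputable def vDST (t k : ℕ) : Fin t → ℝ :=
  fun j => Real.sin ((k : ℝ) * Real.pi * ((j : ℕ) + 1) / ((t : ℝ) + 1))

/-- The vector `u_k^+`, `(u_k^+)_j = sin(kπ(j+1/2)/(t+1))`. -/
noncomputable def uPlus (t k : ℕ) : Fin (t + 1) → ℝ :=
  fun j => Real.sin ((k : ℝ) * Real.pi * ((j : ℕ) + 1 / 2) / ((t : ℝ) + 1))

private lemma sum_aux (t k n : ℕ) (ht : 0 < t) (hn : n ≤ t) :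
    ∑ j ∈ Finset.range t,
      (if n = j then (1:ℝ) else if n = j + 1 then 1 else 0) *
        Real.sin ((k : ℝ) * Real.pi * ((j : ℝ) + 1) / ((t : ℝ) + 1))
    = Real.sin ((k : ℝ) * Real.pi * ((n : ℝ) + 1) / ((t : ℝ) + 1))
      + Real.sin ((k : ℝ) * Real.pi * (n : ℝ) / ((t : ℝ) + 1)) := by
  set s : ℕ → ℝ := fun j => Real.sin ((k : ℝ) * Real.pi * ((j : ℝ) + 1) / ((t : ℝ) + 1)) with hs
  have hsplit : ∀ j, (if n = j then (1:ℝ) else if n = j + 1 then 1 else 0) * s j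
      = (if j = n then s j else 0) + (if j + 1 = n then s j else 0) := by
    intro j
    by_cases h1 : n = j
    · by_cases h2 : j + 1 = n <;> simp [h1, h2] <;> omega
    · by_cases h2 : j + 1 = n
      · simp [h1, Ne.symm h1, h2]
      · have h2' : n ≠ j + 1 := fun h => h2 h.symm
        simp [h1, Ne.symm h1, h2, h2']
  rw [Finset.sum_congr rfl (fun j _ => hsplit j), Finset.sum_add_distrib]
  have first : (∑ j ∈ Finset.range t, if j = n then s j else 0)
      = Real.sin ((k : ℝ) * Real.pi * ((n : ℝ) + 1) / ((t : ℝ) + 1)) := by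
    rw [Finset.sum_ite_eq' (Finset.range t) n s]
    by_cases h : n < t
    · simp [h, hs]
    · have hnt : n = t := by omega
      have : Real.sin ((k : ℝ) * Real.pi * ((n : ℝ) + 1) / ((t : ℝ) + 1)) = 0 := by
        have ht1 : ((t : ℝ) + 1) ≠ 0 := by positivity
        have : (k : ℝ) * Real.pi * ((n : ℝ) + 1) / ((t : ℝ) + 1) = (k : ℝ) * Real.pi := by
          rw [hnt]; field_simp
        rw [this, Real.sin_nat_mul_pi]
      simp [h, this]
  have second : (∑ j ∈ Finset.range t, if j + 1 = n then s j else 0)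
      = Real.sin ((k : ℝ) * Real.pi * (n : ℝ) / ((t : ℝ) + 1)) := by
    rcases n with _ | m
    · simp
    · have hcond : ∀ j, (j + 1 = m + 1) ↔ (j = m) := by omega
      have : (∑ j ∈ Finset.range t, if j + 1 = m + 1 then s j else 0)
          = ∑ j ∈ Finset.range t, if j = m then s j else 0 := by
        refine Finset.sum_congr rfl fun j _ => ?_
        simp [hcond j]
      rw [this, Finset.sum_ite_eq' (Finset.range t) m s]
      have hm : m < t := by omega
      simp [hm, hs]
  rw [first, second]

theorem Kplus_mulVec_v (t k : ℕ) (ht : 0 < t) (hk1 : 1 ≤ k) (hkt : k ≤ t) :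
    (Kplus t) *ᵥ (vDST t k)
      = (2 * Real.cos ((k : ℝ) * Real.pi / (2 * (t : ℝ) + 2))) • uPlus t k := by
  funext i
  simp only [Matrix.mulVec, dotProduct, Kplus, vDST, uPlus, Pi.smul_apply, smul_eq_mul]
  set n := (i : ℕ) with hn
  have hnt : n ≤ t := by omega
  rw [Fin.sum_univ_eq_sum_range (fun j =>
    (if n = j then (1:ℝ) else if n = j + 1 then 1 else 0) *
      Real.sin ((k : ℝ) * Real.pi * ((j : ℝ) + 1) / ((t : ℝ) + 1)))]
  rw [sum_aux t k n ht hnt]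
  set A := (k : ℝ) * Real.pi * ((n : ℝ) + 1 / 2) / ((t : ℝ) + 1) with hA
  set B := (k : ℝ) * Real.pi / (2 * (t : ℝ) + 2) with hB
  have ht1 : ((t : ℝ) + 1) ≠ 0 := by positivity
  have h1 : (k : ℝ) * Real.pi * ((n : ℝ) + 1) / ((t : ℝ) + 1) = A + B := by
    rw [hA, hB]; field_simp; ring
  have h2 : (k : ℝ) * Real.pi * (n : ℝ) / ((t : ℝ) + 1) = A - B := by
    rw [hA, hB]; field_simp; ring
  rw [h1, h2, Real.sin_add, Real.sin_sub]; ring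
end

section
/- Let t be a positive natural number and let k be an integer with 1 ≤ k ≤ t. Then the transpose of K_t^+ applied to u_k^+ equals σ_k^+ · v_k; that is, (K_t^+)^⊤ u_k^+ = σ_k^+ v_k. -/
open Real Matrix

/-- The `(t+1) × t` convolution matrix `K_t^-` with kernel `[1, -1]ᵀ`. -/
noncomputable def Kminus (t : ℕ) : Matrix (Fin (t + 1)) (Fin t) ℝ :=
  fun i j => if (i : ℕ) = (j : ℕ) then -1 else if (i : ℕ) = (j : ℕ) + 1 then 1 else 0

/-- The vector `u_k^-`, `(u_k^-)_j = cos(kπ(j+1/2)/(t+1))`. -/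
noncomputable def uMinus (t k : ℕ) : Fin (t + 1) → ℝ :=
  fun j => Real.cos ((k : ℝ) * Real.pi * ((j : ℕ) + 1 / 2) / ((t : ℝ) + 1))

lemma my_sin_add_sin (x y : ℝ) :
    Real.sin x + Real.sin y = 2 * Real.sin ((x + y) / 2) * Real.cos ((x - y) / 2) := by
  have h1 : x = (x + y) / 2 + (x - y) / 2 := by ring
  have h2 : y = (x + y) / 2 - (x - y) / 2 := by ring
  rw [h1, h2, Real.sin_add, Real.sin_sub]; ring

theorem Kplus_transpose_mulVec_u (t k : ℕ) (ht : 0 < t) (hk1 : 1 ≤ k) (hkt : k ≤ t) :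
    (Kplus t)ᵀ *ᵥ (uPlus t k)
      = (2 * Real.cos ((k : ℝ) * Real.pi / (2 * (t : ℝ) + 2))) • vDST t k := by
  funext j
  have hsum : ((Kplus t)ᵀ *ᵥ (uPlus t k)) j
      = uPlus t k j.castSucc + uPlus t k j.succ := by
    simp only [mulVec, dotProduct, transpose_apply, Kplus]
    have key : ∀ i : Fin (t + 1),
        (if (i : ℕ) = (j : ℕ) then (1:ℝ) else if (i : ℕ) = (j : ℕ) + 1 then 1 else 0)
          * uPlus t k i
        = (if i = j.castSucc then uPlus t k i else 0)
          + (if i = j.succ then uPlus t k i else 0) := by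
      intro i
      have h1 : ((i : ℕ) = (j : ℕ)) ↔ i = j.castSucc := by
        rw [Fin.ext_iff]; simp
      have h2 : ((i : ℕ) = (j : ℕ) + 1) ↔ i = j.succ := by
        rw [Fin.ext_iff]; simp
      have hne : j.castSucc ≠ j.succ := (Fin.castSucc_lt_succ (i := j)).ne
      by_cases hc1 : i = j.castSucc <;> by_cases hc2 : i = j.succ <;>
        simp_all
    rw [Finset.sum_congr rfl (fun i _ => key i), Finset.sum_add_distrib]
    simp
  rw [hsum]
  simp only [uPlus, vDST, Pi.smul_apply, smul_eq_mul, Fin.coe_castSucc, Fin.val_succ]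
  rw [my_sin_add_sin]
  have ht1 : (t : ℝ) + 1 ≠ 0 := by positivity
  have e1 : ((k:ℝ) * Real.pi * ((j : ℕ) + 1 / 2) / ((t : ℝ) + 1)
      + (k:ℝ) * Real.pi * (((j : ℕ) + 1 : ℕ) + 1 / 2) / ((t : ℝ) + 1)) / 2
      = (k : ℝ) * Real.pi * ((j : ℕ) + 1) / ((t : ℝ) + 1) := by
    push_cast; field_simp; ring
  have e2 : ((k:ℝ) * Real.pi * ((j : ℕ) + 1 / 2) / ((t : ℝ) + 1)
      - (k:ℝ) * Real.pi * (((j : ℕ) + 1 : ℕ) + 1 / 2) / ((t : ℝ) + 1)) / 2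
      = -((k : ℝ) * Real.pi / (2 * (t : ℝ) + 2)) := by
    push_cast; field_simp; ring
  rw [e1, e2, Real.cos_neg]
  ring
end

section
/- Let t be a positive natural number and let k be an integer with 1 ≤ k ≤ t. Then K_t^- v_k = −σ_k^- u_k^-; that is, for every i ∈ {0,…,t}, the i-th entry of K_t^- v_k equals −σ_k^- · (u_k^-)_i. -/
open Real Matrix

lemma sum_diff_aux (t i : ℕ) (hi : i ≤ t) (f : ℕ → ℝ) (h0 : f 0 = 0) (h1 : f (t + 1) = 0) :
    ∑ j ∈ Finset.range t, (if i = j then (-1 : ℝ) else if i = j + 1 then 1 else 0) * f (j + 1)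
      = f i - f (i + 1) := by
  have key : ∀ j, (if i = j then (-1 : ℝ) else if i = j + 1 then 1 else 0) * f (j + 1)
      = (if j + 1 = i then f (j + 1) else 0) - (if j = i then f (j + 1) else 0) := by
    intro j
    by_cases h : i = j
    · have h2' : ¬ (j + 1 = i) := by omega
      rw [if_pos h, if_neg h2', if_pos h.symm]
      ring
    · by_cases h2 : i = j + 1
      · have h4' : ¬ (j = i) := by omega
        rw [if_neg h, if_pos h2, if_pos h2.symm, if_neg h4']
        ring
      · have h3' : ¬ (j + 1 = i) := by omega
        have h4' : ¬ (j = i) := by omega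
        rw [if_neg h, if_neg h2, if_neg h3', if_neg h4']
        ring
  rw [Finset.sum_congr rfl (fun j _ => key j), Finset.sum_sub_distrib]
  have hA : ∑ j ∈ Finset.range t, (if j + 1 = i then f (j + 1) else 0) = f i := by
    have := Finset.sum_range_succ' (fun m => if m = i then f m else 0) t
    have h0' : (if 0 = i then f 0 else 0) = 0 := by
      rcases eq_or_ne (0 : ℕ) i with h | h
      · rw [if_pos h]; exact h0
      · rw [if_neg h]
    rw [h0', add_zero] at this
    have hfull : ∑ m ∈ Finset.range (t + 1), (if m = i then f m else 0) = f i := by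
      rw [Finset.sum_ite_eq']
      simp [Finset.mem_range, Nat.lt_succ_of_le hi]
    rw [← hfull, this]
  have hB : ∑ j ∈ Finset.range t, (if j = i then f (j + 1) else 0) = f (i + 1) := by
    rw [Finset.sum_ite_eq']
    rcases lt_or_eq_of_le hi with h | h
    · simp [Finset.mem_range, h]
    · subst h; simp [h1]
  rw [hA, hB]


theorem Kminus_mulVec_v (t k : ℕ) (ht : 0 < t) (hk1 : 1 ≤ k) (hkt : k ≤ t) :
    (Kminus t) *ᵥ (vDST t k)
      = (-(2 * Real.sin ((k : ℝ) * Real.pi / (2 * (t : ℝ) + 2)))) • uMinus t k := by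
  have htR : ((t : ℝ) + 1) ≠ 0 := by positivity
  funext i
  have hi : (i : ℕ) ≤ t := Nat.lt_succ_iff.mp i.isLt
  set f : ℕ → ℝ := fun n => Real.sin ((k : ℝ) * Real.pi * (n : ℝ) / ((t : ℝ) + 1)) with hf
  have h0 : f 0 = 0 := by simp [hf]
  have h1 : f (t + 1) = 0 := by
    have harg : (k : ℝ) * Real.pi * ((t + 1 : ℕ) : ℝ) / ((t : ℝ) + 1) = (k : ℝ) * Real.pi := by
      push_cast
      field_simp
    simp only [hf, harg]
    exact Real.sin_nat_mul_pi k
  have hsum := sum_diff_aux t (i : ℕ) hi f h0 h1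
  have hL : (Kminus t *ᵥ vDST t k) i = f i - f (i + 1) := by
    rw [← hsum]
    simp only [Matrix.mulVec, dotProduct, Kminus, vDST]
    rw [Fin.sum_univ_eq_sum_range (fun j =>
      (if (i : ℕ) = j then (-1 : ℝ) else if (i : ℕ) = j + 1 then 1 else 0) *
        Real.sin ((k : ℝ) * Real.pi * ((j : ℝ) + 1) / ((t : ℝ) + 1)))]
    refine Finset.sum_congr rfl fun j _ => ?_
    simp only [hf]
    push_cast
    ring_nf
  rw [hL]
  simp only [Pi.smul_apply, uMinus, smul_eq_mul, hf]
  rw [Real.sin_sub_sin]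
  have e1 : ((k : ℝ) * Real.pi * ((i : ℕ) : ℝ) / ((t : ℝ) + 1)
      - (k : ℝ) * Real.pi * (((i : ℕ) + 1 : ℕ) : ℝ) / ((t : ℝ) + 1)) / 2
      = -((k : ℝ) * Real.pi / (2 * (t : ℝ) + 2)) := by
    push_cast
    field_simp
    ring
  have e2 : ((k : ℝ) * Real.pi * ((i : ℕ) : ℝ) / ((t : ℝ) + 1)
      + (k : ℝ) * Real.pi * (((i : ℕ) + 1 : ℕ) : ℝ) / ((t : ℝ) + 1)) / 2
      = (k : ℝ) * Real.pi * (((i : ℕ) : ℝ) + 1 / 2) / ((t : ℝ) + 1) := by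
    push_cast
    field_simp
    ring
  rw [e1, e2, Real.sin_neg]
  ring
end

section
/- Let t be a positive natural number and let k be an integer with 1 ≤ k ≤ t. Then (K_t^-)^⊤ u_k^- = −σ_k^- v_k; that is, for every j ∈ {0,…,t−1}, the j-th entry of (K_t^-)^⊤ u_k^- equals −σ_k^- · (v_k)_j. -/
open Real Matrix

theorem Kminus_transpose_mulVec_u (t k : ℕ) (ht : 0 < t) (hk1 : 1 ≤ k) (hkt : k ≤ t) :
    (Kminus t)ᵀ *ᵥ (uMinus t k)
      = (-(2 * Real.sin ((k : ℝ) * Real.pi / (2 * (t : ℝ) + 2)))) • vDST t k := by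
  funext j
  have hj1 : (j : ℕ) < t + 1 := Nat.lt_succ_of_lt j.2
  have hj2 : (j : ℕ) + 1 < t + 1 := Nat.succ_lt_succ j.2
  have hne : (⟨(j : ℕ), hj1⟩ : Fin (t+1)) ≠ ⟨(j : ℕ) + 1, hj2⟩ := by
    simp [Fin.ext_iff]
  have hsum : ((Kminus t)ᵀ *ᵥ (uMinus t k)) j
      = -(uMinus t k ⟨(j : ℕ), hj1⟩) + uMinus t k ⟨(j : ℕ) + 1, hj2⟩ := by
    simp only [mulVec, dotProduct]
    have h0 : ∀ c : Fin (t+1), c ≠ ⟨(j : ℕ), hj1⟩ ∧ c ≠ ⟨(j : ℕ)+1, hj2⟩ →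
        (Kminus t)ᵀ j c * uMinus t k c = 0 := by
      intro c ⟨hc1, hc2⟩
      have h1 : (c : ℕ) ≠ (j : ℕ) := fun h => hc1 (Fin.ext h)
      have h2 : (c : ℕ) ≠ (j : ℕ) + 1 := fun h => hc2 (Fin.ext h)
      simp [transpose, Kminus, h1, h2]
    rw [Fintype.sum_eq_add (⟨(j : ℕ), hj1⟩ : Fin (t+1)) ⟨(j : ℕ)+1, hj2⟩ hne h0]
    simp [transpose, Kminus]
  rw [hsum]
  simp only [uMinus, vDST, Pi.smul_apply, smul_eq_mul]
  have ht1 : ((t : ℝ) + 1) ≠ 0 := by positivity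
  rw [neg_add_eq_sub, Real.cos_sub_cos]
  have e1 : (↑k * Real.pi * ((↑((j : ℕ) + 1) : ℝ) + 1 / 2) / (↑t + 1)
      + ↑k * Real.pi * ((↑(j : ℕ) : ℝ) + 1 / 2) / (↑t + 1)) / 2
      = ↑k * Real.pi * ((↑(j : ℕ) : ℝ) + 1) / (↑t + 1) := by
    push_cast
    field_simp
    ring
  have e2 : (↑k * Real.pi * ((↑((j : ℕ) + 1) : ℝ) + 1 / 2) / (↑t + 1)
      - ↑k * Real.pi * ((↑(j : ℕ) : ℝ) + 1 / 2) / (↑t + 1)) / 2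
      = ↑k * Real.pi / (2 * ↑t + 2) := by
    push_cast
    field_simp
    ring
  rw [e1, e2]
  ring
end

section
/- Let t be a positive natural number. Define the matrices Û ∈ ℝ^{(t+1)×t} with columns Û_{·,k} = √(2/(t+1)) u_k^+ for k ∈ {1,…,t}, V̂ ∈ ℝ^{t×t} with columns V̂_{·,k} = √(2/(t+1)) v_k, and the diagonal matrix Σ ∈ ℝ^{t×t} with diagonal entries σ_k^+ = 2cos(kπ/(2t+2)). Then: (i) V̂^⊤V̂ = I_t and V̂V̂^⊤ = I_t (V̂ is orthogonal); (ii) Û^⊤Û = I_t (Û has orthonormal columns); (iii) every σ_k^+ > 0; and (iv) K_t^+ = Û Σ V̂^⊤. In other words, this is a singular value decomposition of K_t^+ with singular values σ_k^+. -/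
open Real Matrix

open Complex in
lemma re_inv_sub_one {z : ℂ} (hz : Complex.normSq z = 1) (h1 : z ≠ 1) :
    ((z - 1)⁻¹).re = -(1/2) := by
  have hre : z.re ≠ 1 := by
    intro h
    apply h1
    have : z.im ^ 2 = 0 := by
      have := hz; rw [Complex.normSq_apply] at this; nlinarith
    have him : z.im = 0 := by nlinarith
    apply Complex.ext <;> simp [h, him]
  have hns : Complex.normSq (z - 1) = 2 - 2 * z.re := by
    rw [Complex.normSq_apply] at hz ⊢
    simp only [Complex.sub_re, Complex.sub_im, Complex.one_re, Complex.one_im]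
    nlinarith
  rw [Complex.inv_re, hns]
  simp only [Complex.sub_re, Complex.one_re]
  have h2 : 2 - 2 * z.re ≠ 0 := by intro h; apply hre; linarith
  field_simp
  ring

lemma re_w_mul_inv (α : ℝ) (h1 : Complex.exp ((α:ℂ)*Complex.I) ≠ 1) :
    (Complex.exp (((α/2 : ℝ):ℂ)*Complex.I) * (Complex.exp ((α:ℂ)*Complex.I) - 1)⁻¹).re = 0 := by
  have hd : Complex.normSq (Complex.exp ((α:ℂ)*Complex.I) - 1) ≠ 0 := by
    intro h; exact h1 (sub_eq_zero.mp (Complex.normSq_eq_zero.mp h))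
  rw [Complex.mul_re, Complex.inv_re, Complex.inv_im, Complex.sub_re, Complex.sub_im,
    Complex.one_re, Complex.one_im, Complex.exp_ofReal_mul_I_re, Complex.exp_ofReal_mul_I_im,
    Complex.exp_ofReal_mul_I_re, Complex.exp_ofReal_mul_I_im]
  have hc : Real.cos α = 1 - 2 * Real.sin (α/2) ^ 2 := by
    have := Real.cos_two_mul (α/2)
    have h2 := Real.sin_sq_add_cos_sq (α/2)
    rw [show 2*(α/2) = α by ring] at this
    nlinarith
  have hs : Real.sin α = 2 * Real.sin (α/2) * Real.cos (α/2) := by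
    have := Real.sin_two_mul (α/2)
    rw [show 2*(α/2) = α by ring] at this
    exact this
  rw [hc, hs]
  field_simp
  ring

lemma exp_ne_one_of_not_dvd (N : ℕ) (hN : 0 < N) (r : ℤ) (hr : ¬ ((2*(N:ℤ)) ∣ r)) :
    Complex.exp ((((r:ℝ) * Real.pi / N : ℝ) : ℂ) * Complex.I) ≠ 1 := by
  intro h
  rw [Complex.exp_eq_one_iff] at h
  obtain ⟨n, hn⟩ := h
  apply hr
  have hNr : (N:ℝ) ≠ 0 := Nat.cast_ne_zero.mpr hN.ne'
  have : ((r:ℝ) * Real.pi / N : ℝ) = n * (2 * Real.pi) := by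
    have := hn
    rw [show (n:ℂ) * (2 * ↑Real.pi * Complex.I) = ((n * (2*Real.pi) : ℝ) : ℂ) * Complex.I by
      push_cast; ring] at this
    have := mul_right_cancel₀ Complex.I_ne_zero this
    exact_mod_cast this
  have hreal : (r:ℝ) = 2 * N * n := by
    field_simp at this
    nlinarith [Real.pi_ne_zero, this, Real.pi_pos]
  have : r = 2 * (N:ℤ) * n := by exact_mod_cast hreal
  exact ⟨n, this⟩

lemma sumA (N : ℕ) (hN : 0 < N) (r : ℤ) (hr : ¬ ((2*(N:ℤ)) ∣ r)) :
    ∑ j ∈ Finset.range N, Real.cos ((r:ℝ) * Real.pi * j / N) = (1 - Real.cos (r*Real.pi))/2 := by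
  set α : ℝ := (r:ℝ) * Real.pi / N with hα
  set z : ℂ := Complex.exp ((α:ℂ) * Complex.I) with hzdef
  have hz1 : z ≠ 1 := exp_ne_one_of_not_dvd N hN r hr
  have hNr : (N:ℝ) ≠ 0 := Nat.cast_ne_zero.mpr hN.ne'
  have key : ∀ j : ℕ, Real.cos ((r:ℝ) * Real.pi * j / N) = (z ^ j).re := by
    intro j
    rw [hzdef, ← Complex.exp_nat_mul]
    rw [show (j:ℂ) * ((α:ℂ) * Complex.I) = (((j * α : ℝ)) : ℂ) * Complex.I by push_cast; ring]
    rw [Complex.exp_ofReal_mul_I_re]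
    congr 1
    rw [hα]; field_simp
  rw [Finset.sum_congr rfl (fun j _ => key j), ← Complex.re_sum, geom_sum_eq hz1]
  have hzN : z ^ N = ((Real.cos (r * Real.pi) : ℝ) : ℂ) := by
    rw [hzdef, ← Complex.exp_nat_mul]
    have hNc : (N:ℂ) ≠ 0 := Nat.cast_ne_zero.mpr hN.ne'
    rw [show (N:ℂ) * ((α:ℂ) * Complex.I) = (((r:ℝ) * Real.pi : ℝ) : ℂ) * Complex.I by
      rw [hα]; push_cast; field_simp [hNc]]
    rw [Complex.exp_mul_I, ← Complex.ofReal_cos, ← Complex.ofReal_sin, Real.sin_int_mul_pi]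
    simp
  have hns : Complex.normSq z = 1 := by
    rw [← Complex.sq_norm, hzdef, Complex.norm_exp_ofReal_mul_I]; norm_num
  rw [hzN, show ((Real.cos ((r:ℝ) * Real.pi) : ℝ) : ℂ) - 1 = ((Real.cos ((r:ℝ)*Real.pi) - 1 : ℝ) : ℂ) by push_cast; ring,
    div_eq_mul_inv, Complex.re_ofReal_mul, re_inv_sub_one hns hz1]
  ring

lemma sumB (N : ℕ) (hN : 0 < N) (r : ℤ) (hr : ¬ ((2*(N:ℤ)) ∣ r)) :
    ∑ j ∈ Finset.range N, Real.cos ((r:ℝ) * Real.pi * (j + 1/2) / N) = 0 := by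
  set α : ℝ := (r:ℝ) * Real.pi / N with hα
  set z : ℂ := Complex.exp ((α:ℂ) * Complex.I) with hzdef
  set w : ℂ := Complex.exp (((α/2 : ℝ):ℂ) * Complex.I) with hwdef
  have hz1 : z ≠ 1 := exp_ne_one_of_not_dvd N hN r hr
  have hNr : (N:ℝ) ≠ 0 := Nat.cast_ne_zero.mpr hN.ne'
  have key : ∀ j : ℕ, Real.cos ((r:ℝ) * Real.pi * (j + 1/2) / N) = (w * z ^ j).re := by
    intro j
    rw [hzdef, hwdef, ← Complex.exp_nat_mul, ← Complex.exp_add]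
    rw [show ((α/2:ℝ):ℂ) * Complex.I + (j:ℂ) * ((α:ℂ) * Complex.I)
        = (((α/2 + j * α : ℝ)) : ℂ) * Complex.I by push_cast; ring]
    rw [Complex.exp_ofReal_mul_I_re]
    congr 1
    rw [hα]; field_simp; ring
  rw [Finset.sum_congr rfl (fun j _ => key j), ← Complex.re_sum, ← Finset.mul_sum, geom_sum_eq hz1]
  have hzN : z ^ N = ((Real.cos ((r:ℝ) * Real.pi) : ℝ) : ℂ) := by
    rw [hzdef, ← Complex.exp_nat_mul]
    have hNc : (N:ℂ) ≠ 0 := Nat.cast_ne_zero.mpr hN.ne'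
    rw [show (N:ℂ) * ((α:ℂ) * Complex.I) = (((r:ℝ) * Real.pi : ℝ) : ℂ) * Complex.I by
      rw [hα]; push_cast; field_simp [hNc]]
    rw [Complex.exp_mul_I, ← Complex.ofReal_cos, ← Complex.ofReal_sin, Real.sin_int_mul_pi]
    simp
  rw [hzN, show ((Real.cos ((r:ℝ) * Real.pi) : ℝ) : ℂ) - 1 = ((Real.cos ((r:ℝ)*Real.pi) - 1 : ℝ) : ℂ) by push_cast; ring]
  rw [div_eq_mul_inv, show w * (((Real.cos ((r:ℝ)*Real.pi) - 1 : ℝ) : ℂ) * (z-1)⁻¹)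
      = ((Real.cos ((r:ℝ)*Real.pi) - 1 : ℝ) : ℂ) * (w * (z-1)⁻¹) by ring,
    Complex.re_ofReal_mul, re_w_mul_inv α hz1]
  ring

lemma not_dvd_of_bounds (d r : ℤ) (h0 : r ≠ 0) (hlt : |r| < d) : ¬ d ∣ r := by
  intro h
  have := Int.le_of_dvd (abs_pos.mpr h0) ((dvd_abs d r).mpr h)
  omega

lemma sumA' (t : ℕ) (r : ℤ) (hr : ¬ ((2*((t:ℤ)+1)) ∣ r)) :
    ∑ j ∈ Finset.range t, Real.cos ((r:ℝ) * Real.pi * ((j:ℝ)+1) / ((t:ℝ)+1))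
      = (1 - Real.cos (r*Real.pi))/2 - 1 := by
  have h := sumA (t+1) (Nat.succ_pos t) r (by push_cast at hr ⊢; exact hr)
  rw [Finset.sum_range_succ'] at h
  push_cast at h
  norm_num at h
  linarith [h]

lemma sin_orth' (t m n : ℕ) (hm : m ≤ t + 1) (hn1 : 1 ≤ n) (hnt : n ≤ t) :
    ∑ x ∈ Finset.range t, Real.sin ((m:ℝ)*Real.pi*((x:ℝ)+1)/((t:ℝ)+1)) *
        Real.sin ((n:ℝ)*Real.pi*((x:ℝ)+1)/((t:ℝ)+1))
      = if m = n then ((t:ℝ)+1)/2 else 0 := by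
  rcases Nat.eq_zero_or_pos m with hm0 | hm1
  · subst hm0
    rw [if_neg (by omega)]
    apply Finset.sum_eq_zero; intro x _; norm_num
  rcases eq_or_ne m (t+1) with hmt | hmt
  · subst hmt
    rw [if_neg (by omega)]
    apply Finset.sum_eq_zero; intro x _
    have ht0 : ((t:ℝ)+1) ≠ 0 := by positivity
    have harg : (((t+1:ℕ)):ℝ)*Real.pi*((x:ℝ)+1)/((t:ℝ)+1) = ((((x+1:ℕ):ℤ)):ℝ) * Real.pi := by
      push_cast; field_simp
    rw [harg, Real.sin_int_mul_pi, zero_mul]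
  -- main case : 1 ≤ m ≤ t
  have hmt' : m ≤ t := by omega
  have key : ∀ x : ℕ, Real.sin ((m:ℝ)*Real.pi*((x:ℝ)+1)/((t:ℝ)+1)) *
        Real.sin ((n:ℝ)*Real.pi*((x:ℝ)+1)/((t:ℝ)+1))
      = (Real.cos ((((m:ℤ)-n : ℤ):ℝ) * Real.pi * ((x:ℝ)+1)/((t:ℝ)+1))
        - Real.cos ((((m:ℤ)+n : ℤ):ℝ) * Real.pi * ((x:ℝ)+1)/((t:ℝ)+1))) / 2 := by
    intro x
    have h := Real.two_mul_sin_mul_sin ((m:ℝ)*Real.pi*((x:ℝ)+1)/((t:ℝ)+1))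
      ((n:ℝ)*Real.pi*((x:ℝ)+1)/((t:ℝ)+1))
    rw [show (m:ℝ)*Real.pi*((x:ℝ)+1)/((t:ℝ)+1) - (n:ℝ)*Real.pi*((x:ℝ)+1)/((t:ℝ)+1)
        = (((m:ℤ)-n : ℤ):ℝ) * Real.pi * ((x:ℝ)+1)/((t:ℝ)+1) by push_cast; ring,
      show (m:ℝ)*Real.pi*((x:ℝ)+1)/((t:ℝ)+1) + (n:ℝ)*Real.pi*((x:ℝ)+1)/((t:ℝ)+1)
        = (((m:ℤ)+n : ℤ):ℝ) * Real.pi * ((x:ℝ)+1)/((t:ℝ)+1) by push_cast; ring] at h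
    linarith
  rw [Finset.sum_congr rfl (fun x _ => key x), ← Finset.sum_div, Finset.sum_sub_distrib]
  rcases eq_or_ne m n with hmn | hmn
  · subst hmn
    rw [if_pos rfl]
    have h1 : ∑ x ∈ Finset.range t, Real.cos ((((m:ℤ)-m : ℤ):ℝ) * Real.pi * ((x:ℝ)+1)/((t:ℝ)+1))
        = t := by
      have hone : ∀ x ∈ Finset.range t,
          Real.cos ((((m:ℤ)-m : ℤ):ℝ) * Real.pi * ((x:ℝ)+1)/((t:ℝ)+1)) = 1 := by
        intro x _
        norm_num
      rw [Finset.sum_congr rfl hone]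
      simp
    have h2 := sumA' t ((m:ℤ)+m) (not_dvd_of_bounds _ _ (by omega)
      (by rw [abs_lt]; constructor <;> push_cast <;> [linarith [Nat.cast_nonneg (α := ℤ) m]; omega]))
    have h3 : Real.cos ((((m:ℤ)+m : ℤ):ℝ) * Real.pi) = 1 := by
      rw [show (((m:ℤ)+m : ℤ):ℝ) * Real.pi = (m:ℤ) * (2 * Real.pi) by push_cast; ring]
      exact Real.cos_int_mul_two_pi m
    rw [h1, h2, h3]
    ring
  · rw [if_neg hmn]
    have hne : ((m:ℤ) - n) ≠ 0 := by omega
    have h1 := sumA' t ((m:ℤ)-n) (not_dvd_of_bounds _ _ hne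
      (by rw [abs_lt]; constructor <;> push_cast <;> omega))
    have h2 := sumA' t ((m:ℤ)+n) (not_dvd_of_bounds _ _ (by omega)
      (by rw [abs_lt]; constructor <;> push_cast <;> omega))
    have h3 : Real.cos ((((m:ℤ)+n : ℤ):ℝ) * Real.pi) = Real.cos ((((m:ℤ)-n : ℤ):ℝ) * Real.pi) := by
      rw [show (((m:ℤ)+n : ℤ):ℝ) * Real.pi = (((m:ℤ)-n : ℤ):ℝ) * Real.pi + (n:ℤ) * (2 * Real.pi) by
        push_cast; ring]
      exact Real.cos_add_int_mul_two_pi _ n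
    rw [h1, h2, h3]
    ring

lemma sumB' (t : ℕ) (r : ℤ) (hr : ¬ ((2*((t:ℤ)+1)) ∣ r)) :
    ∑ j ∈ Finset.range (t+1), Real.cos ((r:ℝ) * Real.pi * ((j:ℝ)+1/2) / ((t:ℝ)+1)) = 0 := by
  have h := sumB (t+1) (Nat.succ_pos t) r (by push_cast at hr ⊢; exact hr)
  push_cast at h
  exact h

lemma sin_orth_half' (t m n : ℕ) (hm1 : 1 ≤ m) (hmt : m ≤ t) (hn1 : 1 ≤ n) (hnt : n ≤ t) :
    ∑ x ∈ Finset.range (t+1), Real.sin ((m:ℝ)*Real.pi*((x:ℝ)+1/2)/((t:ℝ)+1)) *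
        Real.sin ((n:ℝ)*Real.pi*((x:ℝ)+1/2)/((t:ℝ)+1))
      = if m = n then ((t:ℝ)+1)/2 else 0 := by
  have key : ∀ x : ℕ, Real.sin ((m:ℝ)*Real.pi*((x:ℝ)+1/2)/((t:ℝ)+1)) *
        Real.sin ((n:ℝ)*Real.pi*((x:ℝ)+1/2)/((t:ℝ)+1))
      = (Real.cos ((((m:ℤ)-n : ℤ):ℝ) * Real.pi * ((x:ℝ)+1/2)/((t:ℝ)+1))
        - Real.cos ((((m:ℤ)+n : ℤ):ℝ) * Real.pi * ((x:ℝ)+1/2)/((t:ℝ)+1))) / 2 := by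
    intro x
    have h := Real.two_mul_sin_mul_sin ((m:ℝ)*Real.pi*((x:ℝ)+1/2)/((t:ℝ)+1))
      ((n:ℝ)*Real.pi*((x:ℝ)+1/2)/((t:ℝ)+1))
    rw [show (m:ℝ)*Real.pi*((x:ℝ)+1/2)/((t:ℝ)+1) - (n:ℝ)*Real.pi*((x:ℝ)+1/2)/((t:ℝ)+1)
        = (((m:ℤ)-n : ℤ):ℝ) * Real.pi * ((x:ℝ)+1/2)/((t:ℝ)+1) by push_cast; ring,
      show (m:ℝ)*Real.pi*((x:ℝ)+1/2)/((t:ℝ)+1) + (n:ℝ)*Real.pi*((x:ℝ)+1/2)/((t:ℝ)+1)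
        = (((m:ℤ)+n : ℤ):ℝ) * Real.pi * ((x:ℝ)+1/2)/((t:ℝ)+1) by push_cast; ring] at h
    linarith
  rw [Finset.sum_congr rfl (fun x _ => key x), ← Finset.sum_div, Finset.sum_sub_distrib]
  rcases eq_or_ne m n with hmn | hmn
  · subst hmn
    rw [if_pos rfl]
    have h1 : ∑ x ∈ Finset.range (t+1),
        Real.cos ((((m:ℤ)-m : ℤ):ℝ) * Real.pi * ((x:ℝ)+1/2)/((t:ℝ)+1)) = (t:ℝ)+1 := by
      have hone : ∀ x ∈ Finset.range (t+1),
          Real.cos ((((m:ℤ)-m : ℤ):ℝ) * Real.pi * ((x:ℝ)+1/2)/((t:ℝ)+1)) = 1 := by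
        intro x _
        norm_num
      rw [Finset.sum_congr rfl hone]
      simp
    have h2 := sumB' t ((m:ℤ)+m) (not_dvd_of_bounds _ _ (by omega)
      (by rw [abs_lt]; constructor <;> omega))
    rw [h1, h2]
    ring
  · rw [if_neg hmn]
    have h1 := sumB' t ((m:ℤ)-n) (not_dvd_of_bounds _ _ (by omega)
      (by rw [abs_lt]; constructor <;> omega))
    have h2 := sumB' t ((m:ℤ)+n) (not_dvd_of_bounds _ _ (by omega)
      (by rw [abs_lt]; constructor <;> omega))
    rw [h1, h2]
    ring

lemma sin_orth_fin (t m n : ℕ) (hm : m ≤ t + 1) (hn1 : 1 ≤ n) (hnt : n ≤ t) :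
    ∑ x : Fin t, Real.sin ((m:ℝ)*Real.pi*(((x:ℕ):ℝ)+1)/((t:ℝ)+1)) *
        Real.sin ((n:ℝ)*Real.pi*(((x:ℕ):ℝ)+1)/((t:ℝ)+1))
      = if m = n then ((t:ℝ)+1)/2 else 0 := by
  rw [Fin.sum_univ_eq_sum_range (fun x : ℕ => Real.sin ((m:ℝ)*Real.pi*((x:ℝ)+1)/((t:ℝ)+1)) *
        Real.sin ((n:ℝ)*Real.pi*((x:ℝ)+1)/((t:ℝ)+1)))]
  exact sin_orth' t m n hm hn1 hnt

lemma sin_orth_half_fin (t m n : ℕ) (hm1 : 1 ≤ m) (hmt : m ≤ t) (hn1 : 1 ≤ n) (hnt : n ≤ t) :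
    ∑ x : Fin (t+1), Real.sin ((m:ℝ)*Real.pi*(((x:ℕ):ℝ)+1/2)/((t:ℝ)+1)) *
        Real.sin ((n:ℝ)*Real.pi*(((x:ℕ):ℝ)+1/2)/((t:ℝ)+1))
      = if m = n then ((t:ℝ)+1)/2 else 0 := by
  rw [Fin.sum_univ_eq_sum_range (fun x : ℕ => Real.sin ((m:ℝ)*Real.pi*((x:ℝ)+1/2)/((t:ℝ)+1)) *
        Real.sin ((n:ℝ)*Real.pi*((x:ℝ)+1/2)/((t:ℝ)+1)))]
  exact sin_orth_half' t m n hm1 hmt hn1 hnt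

/-- Singular value decomposition of `K_t^+`. -/
theorem Kplus_svd (t : ℕ) (ht : 0 < t)
    (Uhat : Matrix (Fin (t + 1)) (Fin t) ℝ)
    (hU : Uhat = fun (i : Fin (t + 1)) (k : Fin t) => Real.sqrt (2 / ((t : ℝ) + 1)) * uPlus t ((k : ℕ) + 1) i)
    (Vhat : Matrix (Fin t) (Fin t) ℝ)
    (hV : Vhat = fun (j : Fin t) (k : Fin t) => Real.sqrt (2 / ((t : ℝ) + 1)) * vDST t ((k : ℕ) + 1) j)
    (S : Matrix (Fin t) (Fin t) ℝ)
    (hS : S = Matrix.diagonal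
      (fun k : Fin t => 2 * Real.cos ((((k : ℕ) : ℝ) + 1) * Real.pi / (2 * (t : ℝ) + 2)))) :
    Vhatᵀ * Vhat = 1 ∧ Vhat * Vhatᵀ = 1 ∧ Uhatᵀ * Uhat = 1 ∧
      (∀ k : Fin t, 0 < 2 * Real.cos ((((k : ℕ) : ℝ) + 1) * Real.pi / (2 * (t : ℝ) + 2))) ∧
      Kplus t = Uhat * S * Vhatᵀ := by
  have ht1 : (0:ℝ) < (t:ℝ) + 1 := by positivity
  have hc : Real.sqrt (2 / ((t:ℝ)+1)) * Real.sqrt (2 / ((t:ℝ)+1)) = 2 / ((t:ℝ)+1) :=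
    Real.mul_self_sqrt (by positivity)
  have hVtV : Vhatᵀ * Vhat = 1 := by
    ext k l
    rw [Matrix.mul_apply, Matrix.one_apply]
    have hterm : ∀ j : Fin t, Vhatᵀ k j * Vhat j l
        = 2/((t:ℝ)+1) * (Real.sin ((((k:ℕ)+1 : ℕ):ℝ)*Real.pi*(((j:ℕ):ℝ)+1)/((t:ℝ)+1)) *
            Real.sin ((((l:ℕ)+1 : ℕ):ℝ)*Real.pi*(((j:ℕ):ℝ)+1)/((t:ℝ)+1))) := by
      intro j
      rw [Matrix.transpose_apply]; simp only [hV, vDST]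
      rw [mul_mul_mul_comm, hc]
    rw [Finset.sum_congr rfl (fun j _ => hterm j), ← Finset.mul_sum,
      sin_orth_fin t ((k:ℕ)+1) ((l:ℕ)+1) (Nat.succ_le_succ k.isLt.le) (Nat.le_add_left 1 _)
        l.isLt]
    by_cases h : k = l
    · subst h
      rw [if_pos rfl, if_pos rfl]
      field_simp
    · rw [if_neg (by simpa [Fin.val_eq_val] using h), if_neg h, mul_zero]
  have hUtU : Uhatᵀ * Uhat = 1 := by
    ext k l
    rw [Matrix.mul_apply, Matrix.one_apply]
    have hterm : ∀ j : Fin (t+1), Uhatᵀ k j * Uhat j l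
        = 2/((t:ℝ)+1) * (Real.sin ((((k:ℕ)+1 : ℕ):ℝ)*Real.pi*(((j:ℕ):ℝ)+1/2)/((t:ℝ)+1)) *
            Real.sin ((((l:ℕ)+1 : ℕ):ℝ)*Real.pi*(((j:ℕ):ℝ)+1/2)/((t:ℝ)+1))) := by
      intro j
      rw [Matrix.transpose_apply]; simp only [hU, uPlus]
      rw [mul_mul_mul_comm, hc]
    rw [Finset.sum_congr rfl (fun j _ => hterm j), ← Finset.mul_sum,
      sin_orth_half_fin t ((k:ℕ)+1) ((l:ℕ)+1) (Nat.le_add_left 1 _) k.isLt (Nat.le_add_left 1 _)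
        l.isLt]
    by_cases h : k = l
    · subst h
      rw [if_pos rfl, if_pos rfl]
      field_simp
    · rw [if_neg (by simpa [Fin.val_eq_val] using h), if_neg h, mul_zero]
  have hpos : ∀ k : Fin t, 0 < 2 * Real.cos ((((k : ℕ) : ℝ) + 1) * Real.pi / (2 * (t : ℝ) + 2)) := by
    intro k
    have hk : (((k:ℕ):ℝ) + 1) < (t:ℝ) + 1 := by
      exact_mod_cast Nat.succ_lt_succ k.isLt
    have h2t : (0:ℝ) < 2*(t:ℝ)+2 := by positivity
    have hcpos : 0 < Real.cos ((((k : ℕ) : ℝ) + 1) * Real.pi / (2 * (t : ℝ) + 2)) := by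
      apply Real.cos_pos_of_mem_Ioo
      constructor
      · have : 0 < (((k:ℕ):ℝ) + 1) * Real.pi / (2 * (t:ℝ) + 2) := by positivity
        nlinarith [Real.pi_pos]
      · rw [div_lt_iff₀ h2t]
        nlinarith [Real.pi_pos]
    linarith
  refine ⟨hVtV, mul_eq_one_comm.mp hVtV, hUtU, hpos, ?_⟩
  ext i j
  rw [Matrix.mul_apply]
  have hterm : ∀ k : Fin t, (Uhat * S) i k * Vhatᵀ k j
      = 2/((t:ℝ)+1) * (Real.sin ((((i:ℕ) : ℕ):ℝ)*Real.pi*(((k:ℕ):ℝ)+1)/((t:ℝ)+1)) *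
          Real.sin ((((j:ℕ)+1 : ℕ):ℝ)*Real.pi*(((k:ℕ):ℝ)+1)/((t:ℝ)+1)))
      + 2/((t:ℝ)+1) * (Real.sin ((((i:ℕ)+1 : ℕ):ℝ)*Real.pi*(((k:ℕ):ℝ)+1)/((t:ℝ)+1)) *
          Real.sin ((((j:ℕ)+1 : ℕ):ℝ)*Real.pi*(((k:ℕ):ℝ)+1)/((t:ℝ)+1))) := by
    intro k
    rw [hS, Matrix.mul_diagonal, Matrix.transpose_apply]; simp only [hU, hV, uPlus, vDST]
    have h2s := Real.two_mul_sin_mul_cos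
      ((((k:ℕ)+1 : ℕ):ℝ)*Real.pi*(((i:ℕ):ℝ)+1/2)/((t:ℝ)+1))
      ((((k:ℕ):ℝ)+1)*Real.pi/(2*(t:ℝ)+2))
    rw [show (((k:ℕ)+1 : ℕ):ℝ)*Real.pi*(((i:ℕ):ℝ)+1/2)/((t:ℝ)+1) - (((k:ℕ):ℝ)+1)*Real.pi/(2*(t:ℝ)+2)
        = (((i:ℕ) : ℕ):ℝ)*Real.pi*(((k:ℕ):ℝ)+1)/((t:ℝ)+1) by push_cast; field_simp; ring,
      show (((k:ℕ)+1 : ℕ):ℝ)*Real.pi*(((i:ℕ):ℝ)+1/2)/((t:ℝ)+1) + (((k:ℕ):ℝ)+1)*Real.pi/(2*(t:ℝ)+2)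
        = (((i:ℕ)+1 : ℕ):ℝ)*Real.pi*(((k:ℕ):ℝ)+1)/((t:ℝ)+1) by push_cast; field_simp; ring] at h2s
    rw [show (((k:ℕ)+1 : ℕ):ℝ)*Real.pi*(((j:ℕ):ℝ)+1)/((t:ℝ)+1)
        = (((j:ℕ)+1 : ℕ):ℝ)*Real.pi*(((k:ℕ):ℝ)+1)/((t:ℝ)+1) by push_cast; ring]
    linear_combination (Real.sqrt (2/((t:ℝ)+1)) * Real.sqrt (2/((t:ℝ)+1)) *
        Real.sin ((((j:ℕ)+1 : ℕ):ℝ)*Real.pi*(((k:ℕ):ℝ)+1)/((t:ℝ)+1))) * h2s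
      + ((Real.sin ((((i:ℕ) : ℕ):ℝ)*Real.pi*(((k:ℕ):ℝ)+1)/((t:ℝ)+1))
          + Real.sin ((((i:ℕ)+1 : ℕ):ℝ)*Real.pi*(((k:ℕ):ℝ)+1)/((t:ℝ)+1))) *
        Real.sin ((((j:ℕ)+1 : ℕ):ℝ)*Real.pi*(((k:ℕ):ℝ)+1)/((t:ℝ)+1))) * hc
  rw [Finset.sum_congr rfl (fun k _ => hterm k), Finset.sum_add_distrib,
    ← Finset.mul_sum, ← Finset.mul_sum,
    sin_orth_fin t ((i:ℕ)) ((j:ℕ)+1) i.isLt.le (Nat.le_add_left 1 _) j.isLt,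
    sin_orth_fin t ((i:ℕ)+1) ((j:ℕ)+1) i.isLt (Nat.le_add_left 1 _) j.isLt]
  simp only [Kplus]
  by_cases h1 : (i:ℕ) = (j:ℕ)
  · rw [if_pos h1, if_neg (by omega), if_pos (by omega), mul_zero, zero_add]
    field_simp
  · by_cases h2 : (i:ℕ) = (j:ℕ)+1
    · rw [if_neg h1, if_pos h2, if_pos h2, if_neg (by omega), mul_zero, add_zero]
      field_simp
    · rw [if_neg h1, if_neg h2, if_neg (by omega)]
      norm_num [h1]
end

section
/- Let t be a positive natural number. Define the matrices Û ∈ ℝ^{(t+1)×t} with columns Û_{·,k} = √(2/(t+1)) u_k^- for k ∈ {1,…,t}, W ∈ ℝ^{t×t} with columns W_{·,k} = −√(2/(t+1)) v_k, and the diagonal matrix Σ ∈ ℝ^{t×t} with diagonal entries σ_k^- = 2sin(kπ/(2t+2)). Then: (i) W^⊤W = I_t and WW^⊤ = I_t (W is orthogonal); (ii) Û^⊤Û = I_t (Û has orthonormal columns); (iii) every σ_k^- > 0; and (iv) K_t^- = Û Σ W^⊤. In other words, this is a singular value decomposition of K_t^- with singular values σ_k^-. -/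
open Real Matrix Finset

lemma tele (θ φ : ℝ) (N : ℕ) :
    2 * Real.sin (θ/2) * ∑ m ∈ Finset.range N, Real.cos (m * θ + φ) =
      Real.sin (N * θ + (φ - θ/2)) - Real.sin (φ - θ/2) := by
  induction N with
  | zero => simp
  | succ n ih =>
    rw [Finset.sum_range_succ, mul_add, ih]
    have h := Real.sin_sub_sin ((n+1 : ℝ) * θ + (φ - θ/2)) ((n : ℝ) * θ + (φ - θ/2))
    have h1 : (((n+1 : ℝ) * θ + (φ - θ/2)) - ((n : ℝ) * θ + (φ - θ/2)))/2 = θ/2 := by ring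
    have h2 : (((n+1 : ℝ) * θ + (φ - θ/2)) + ((n : ℝ) * θ + (φ - θ/2)))/2 = n * θ + φ := by ring
    rw [h1, h2] at h
    push_cast
    linarith

lemma sinHalfPos (t n : ℕ) (hn : 0 < n) (hn2 : n < 2*(t+1)) :
    0 < Real.sin ((n : ℝ) * π / ((t : ℝ) + 1) / 2) := by
  apply Real.sin_pos_of_pos_of_lt_pi
  · positivity
  · rw [div_lt_iff₀ (by norm_num), div_lt_iff₀ (by positivity)]
    calc (n : ℝ) * π = π * n := by ring
    _ < π * (2 * (t+1)) := by
        apply mul_lt_mul_of_pos_left _ Real.pi_pos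
        exact_mod_cast hn2
    _ = π * 2 * ((t:ℝ)+1) := by ring

lemma cosSumHalf (t n : ℕ) (hn : 0 < n) (hn2 : n < 2*(t+1)) :
    ∑ j ∈ Finset.range (t+1), Real.cos ((n : ℝ) * π * ((j : ℝ) + 1/2) / ((t : ℝ) + 1)) = 0 := by
  have hne : ((t:ℝ)+1) ≠ 0 := by positivity
  set θ : ℝ := (n : ℝ) * π / ((t : ℝ) + 1) with hθ
  have h := tele θ (θ/2) (t+1)
  have harg : ∀ j : ℕ, (j : ℝ) * θ + θ/2 = (n : ℝ) * π * ((j : ℝ) + 1/2) / ((t : ℝ) + 1) := by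
    intro j; rw [hθ]; field_simp
  simp only [harg] at h
  have hpos := sinHalfPos t n hn hn2
  have h2 : (2:ℝ) * Real.sin (θ/2) ≠ 0 := ne_of_gt (by positivity)
  have hval : ((t+1 : ℕ) : ℝ) * θ + (θ/2 - θ/2) = (n:ℝ) * π := by
    push_cast; rw [hθ]; field_simp; ring
  rw [hval, Real.sin_nat_mul_pi, sub_self, Real.sin_zero, sub_zero] at h
  exact (mul_eq_zero.mp h).resolve_left h2

lemma cosSumInt (t n : ℕ) (hn : 0 < n) (hn2 : n < 2*(t+1)) :
    ∑ j ∈ Finset.range t, Real.cos ((n : ℝ) * π * ((j : ℝ) + 1) / ((t : ℝ) + 1))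
      = (-(-1:ℝ)^n - 1)/2 := by
  have hne : ((t:ℝ)+1) ≠ 0 := by positivity
  set θ : ℝ := (n : ℝ) * π / ((t : ℝ) + 1) with hθ
  have h := tele θ θ t
  have harg : ∀ j : ℕ, (j : ℝ) * θ + θ = (n : ℝ) * π * ((j : ℝ) + 1) / ((t : ℝ) + 1) := by
    intro j; rw [hθ]; field_simp
  simp only [harg] at h
  have hpos := sinHalfPos t n hn hn2
  have h2 : (2:ℝ) * Real.sin (θ/2) ≠ 0 := ne_of_gt (by positivity)
  have hval : (t:ℝ) * θ + (θ - θ/2) = (n:ℝ) * π - θ/2 := by rw [hθ]; field_simp; ring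
  rw [hval, Real.sin_nat_mul_pi_sub, show θ - θ/2 = θ/2 by ring] at h
  have hR : -((-1:ℝ)^n * Real.sin (θ/2)) - Real.sin (θ/2)
      = (2*Real.sin (θ/2)) * ((-(-1:ℝ)^n - 1)/2) := by ring
  exact mul_left_cancel₀ h2 (h.trans hR)

lemma sinOrtho' (t a b : ℕ) (hb1 : 1 ≤ b) (hba : b ≤ a) (ha : a ≤ t) :
    ∑ j ∈ Finset.range t,
      Real.sin ((a:ℝ)*π*((j:ℝ)+1)/((t:ℝ)+1)) * Real.sin ((b:ℝ)*π*((j:ℝ)+1)/((t:ℝ)+1))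
      = if a = b then ((t:ℝ)+1)/2 else 0 := by
  have hne : ((t:ℝ)+1) ≠ 0 := by positivity
  set d := a - b with hdd
  set s := a + b with hss
  have hd : (d:ℝ) = (a:ℝ) - (b:ℝ) := by rw [hdd]; push_cast [Nat.cast_sub hba]; ring
  have key : ∀ j : ℕ,
      Real.sin ((a:ℝ)*π*((j:ℝ)+1)/((t:ℝ)+1)) * Real.sin ((b:ℝ)*π*((j:ℝ)+1)/((t:ℝ)+1))
      = (Real.cos ((d:ℝ)*π*((j:ℝ)+1)/((t:ℝ)+1)) - Real.cos ((s:ℝ)*π*((j:ℝ)+1)/((t:ℝ)+1)))/2 := by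
    intro j
    have h := Real.cos_sub_cos ((d:ℝ)*π*((j:ℝ)+1)/((t:ℝ)+1)) ((s:ℝ)*π*((j:ℝ)+1)/((t:ℝ)+1))
    have h1 : ((d:ℝ)*π*((j:ℝ)+1)/((t:ℝ)+1) + (s:ℝ)*π*((j:ℝ)+1)/((t:ℝ)+1))/2
        = (a:ℝ)*π*((j:ℝ)+1)/((t:ℝ)+1) := by rw [hd]; push_cast [hss]; ring
    have h2 : ((d:ℝ)*π*((j:ℝ)+1)/((t:ℝ)+1) - (s:ℝ)*π*((j:ℝ)+1)/((t:ℝ)+1))/2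
        = -((b:ℝ)*π*((j:ℝ)+1)/((t:ℝ)+1)) := by rw [hd]; push_cast [hss]; ring
    rw [h1, h2, Real.sin_neg] at h
    linarith
  rw [Finset.sum_congr rfl (fun j _ => key j), ← Finset.sum_div]
  rw [Finset.sum_sub_distrib]
  have hs1 : 0 < s := by omega
  have hs2 : s < 2*(t+1) := by omega
  rw [cosSumInt t s hs1 hs2]
  by_cases hab : a = b
  · have hd0 : d = 0 := by omega
    have hseven : (-(-1:ℝ)^s - 1)/2 = -1 := by
      have : s = 2*a := by omega
      simp [this, pow_mul]
      norm_num
    rw [hseven, hd0]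
    simp only [Nat.cast_zero, zero_mul, zero_div, Real.cos_zero]
    rw [Finset.sum_const, Finset.card_range]
    simp [hab]
  · have hd1 : 0 < d := by omega
    have hd2 : d < 2*(t+1) := by omega
    rw [cosSumInt t d hd1 hd2]
    have hpar : (-1:ℝ)^s = (-1:ℝ)^d := by
      have : s = d + 2*b := by omega
      simp [this, pow_add, pow_mul]
    rw [hpar]
    simp [hab]

lemma sinOrtho (t a b : ℕ) (ha1 : 1 ≤ a) (ha : a ≤ t) (hb1 : 1 ≤ b) (hb : b ≤ t) :
    ∑ j ∈ Finset.range t,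
      Real.sin ((a:ℝ)*π*((j:ℝ)+1)/((t:ℝ)+1)) * Real.sin ((b:ℝ)*π*((j:ℝ)+1)/((t:ℝ)+1))
      = if a = b then ((t:ℝ)+1)/2 else 0 := by
  rcases le_total b a with h | h
  · exact sinOrtho' t a b hb1 h ha
  · rw [Finset.sum_congr rfl (fun j _ => mul_comm _ _)]
    rw [sinOrtho' t b a ha1 h hb]
    simp [eq_comm]

lemma cosOrtho' (t a b : ℕ) (hb1 : 1 ≤ b) (hba : b ≤ a) (ha : a ≤ t) :
    ∑ j ∈ Finset.range (t+1),
      Real.cos ((a:ℝ)*π*((j:ℝ)+1/2)/((t:ℝ)+1)) * Real.cos ((b:ℝ)*π*((j:ℝ)+1/2)/((t:ℝ)+1))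
      = if a = b then ((t:ℝ)+1)/2 else 0 := by
  have hne : ((t:ℝ)+1) ≠ 0 := by positivity
  set d := a - b with hdd
  set s := a + b with hss
  have hd : (d:ℝ) = (a:ℝ) - (b:ℝ) := by rw [hdd]; push_cast [Nat.cast_sub hba]; ring
  have key : ∀ j : ℕ,
      Real.cos ((a:ℝ)*π*((j:ℝ)+1/2)/((t:ℝ)+1)) * Real.cos ((b:ℝ)*π*((j:ℝ)+1/2)/((t:ℝ)+1))
      = (Real.cos ((d:ℝ)*π*((j:ℝ)+1/2)/((t:ℝ)+1)) + Real.cos ((s:ℝ)*π*((j:ℝ)+1/2)/((t:ℝ)+1)))/2 := by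
    intro j
    have h := Real.cos_add_cos ((d:ℝ)*π*((j:ℝ)+1/2)/((t:ℝ)+1)) ((s:ℝ)*π*((j:ℝ)+1/2)/((t:ℝ)+1))
    have h1 : ((d:ℝ)*π*((j:ℝ)+1/2)/((t:ℝ)+1) + (s:ℝ)*π*((j:ℝ)+1/2)/((t:ℝ)+1))/2
        = (a:ℝ)*π*((j:ℝ)+1/2)/((t:ℝ)+1) := by rw [hd]; push_cast [hss]; ring
    have h2 : ((d:ℝ)*π*((j:ℝ)+1/2)/((t:ℝ)+1) - (s:ℝ)*π*((j:ℝ)+1/2)/((t:ℝ)+1))/2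
        = -((b:ℝ)*π*((j:ℝ)+1/2)/((t:ℝ)+1)) := by rw [hd]; push_cast [hss]; ring
    rw [h1, h2, Real.cos_neg] at h
    linarith
  rw [Finset.sum_congr rfl (fun j _ => key j), ← Finset.sum_div, Finset.sum_add_distrib]
  have hs1 : 0 < s := by omega
  have hs2 : s < 2*(t+1) := by omega
  rw [cosSumHalf t s hs1 hs2]
  by_cases hab : a = b
  · have hd0 : d = 0 := by omega
    rw [hd0]
    simp only [Nat.cast_zero, zero_mul, zero_div, Real.cos_zero]
    rw [Finset.sum_const, Finset.card_range]
    simp [hab]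
  · have hd1 : 0 < d := by omega
    have hd2 : d < 2*(t+1) := by omega
    rw [cosSumHalf t d hd1 hd2]
    simp [hab]

lemma cosOrtho (t a b : ℕ) (ha1 : 1 ≤ a) (ha : a ≤ t) (hb1 : 1 ≤ b) (hb : b ≤ t) :
    ∑ j ∈ Finset.range (t+1),
      Real.cos ((a:ℝ)*π*((j:ℝ)+1/2)/((t:ℝ)+1)) * Real.cos ((b:ℝ)*π*((j:ℝ)+1/2)/((t:ℝ)+1))
      = if a = b then ((t:ℝ)+1)/2 else 0 := by
  rcases le_total b a with h | h
  · exact cosOrtho' t a b hb1 h ha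
  · rw [Finset.sum_congr rfl (fun j _ => mul_comm _ _)]
    rw [cosOrtho' t b a ha1 h hb]
    simp [eq_comm]

/-- Singular value decomposition of `K_t^-`. -/
theorem Kminus_svd (t : ℕ) (ht : 0 < t)
    (Uhat : Matrix (Fin (t + 1)) (Fin t) ℝ)
    (hU : Uhat = fun (i : Fin (t + 1)) (k : Fin t) => Real.sqrt (2 / ((t : ℝ) + 1)) * uMinus t ((k : ℕ) + 1) i)
    (W : Matrix (Fin t) (Fin t) ℝ)
    (hW : W = fun (j : Fin t) (k : Fin t) => -(Real.sqrt (2 / ((t : ℝ) + 1)) * vDST t ((k : ℕ) + 1) j))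
    (S : Matrix (Fin t) (Fin t) ℝ)
    (hS : S = Matrix.diagonal
      (fun k : Fin t => 2 * Real.sin ((((k : ℕ) : ℝ) + 1) * Real.pi / (2 * (t : ℝ) + 2)))) :
    Wᵀ * W = 1 ∧ W * Wᵀ = 1 ∧ Uhatᵀ * Uhat = 1 ∧
      (∀ k : Fin t, 0 < 2 * Real.sin ((((k : ℕ) : ℝ) + 1) * Real.pi / (2 * (t : ℝ) + 2))) ∧
      Kminus t = Uhat * S * Wᵀ := by

  have hne : ((t:ℝ)+1) ≠ 0 := by positivity
  have hc : Real.sqrt (2/((t:ℝ)+1)) * Real.sqrt (2/((t:ℝ)+1)) = 2/((t:ℝ)+1) :=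
    Real.mul_self_sqrt (by positivity)
  have hprod : ∀ c s1 s2 : ℝ, -(c*s1) * -(c*s2) = (c*c)*(s1*s2) := fun _ _ _ => by ring
  have hprod2 : ∀ c s1 s2 : ℝ, (c*s1) * (c*s2) = (c*c)*(s1*s2) := fun _ _ _ => by ring
  -- W orthogonal
  have hWW : Wᵀ * W = 1 := by
    ext k l
    rw [Matrix.mul_apply, Matrix.one_apply]
    simp only [Matrix.transpose_apply]; simp only [hW, vDST]
    have hterm : ∀ j : Fin t,
        -(Real.sqrt (2/((t:ℝ)+1)) * Real.sin ((((k:ℕ)+1 : ℕ):ℝ) * π * (((j:ℕ):ℝ)+1)/((t:ℝ)+1)))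
        * -(Real.sqrt (2/((t:ℝ)+1)) * Real.sin ((((l:ℕ)+1 : ℕ):ℝ) * π * (((j:ℕ):ℝ)+1)/((t:ℝ)+1)))
        = (2/((t:ℝ)+1)) * (Real.sin ((((k:ℕ)+1 : ℕ):ℝ) * π * (((j:ℕ):ℝ)+1)/((t:ℝ)+1))
          * Real.sin ((((l:ℕ)+1 : ℕ):ℝ) * π * (((j:ℕ):ℝ)+1)/((t:ℝ)+1))) := by
      intro j; rw [hprod, hc]
    rw [Finset.sum_congr rfl (fun j _ => hterm j), ← Finset.mul_sum]
    rw [Fin.sum_univ_eq_sum_range (fun m => Real.sin ((((k:ℕ)+1 : ℕ):ℝ) * π * ((m:ℝ)+1)/((t:ℝ)+1))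
          * Real.sin ((((l:ℕ)+1 : ℕ):ℝ) * π * ((m:ℝ)+1)/((t:ℝ)+1))) t]
    rw [sinOrtho t ((k:ℕ)+1) ((l:ℕ)+1) (Nat.succ_le_succ (Nat.zero_le _)) k.isLt
          (Nat.succ_le_succ (Nat.zero_le _)) l.isLt]
    by_cases hkl : k = l
    · simp only [hkl, if_pos rfl, ↓reduceIte]
      field_simp
    · have hne2 : ¬ ((k:ℕ)+1 = (l:ℕ)+1) := by
        simp only [add_left_inj]
        exact fun h => hkl (Fin.ext h)
      simp [hkl, hne2, Fin.val_inj]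
  have hWWT : W * Wᵀ = 1 := mul_eq_one_comm.mp hWW
  -- Uhat has orthonormal columns
  have hUU : Uhatᵀ * Uhat = 1 := by
    ext k l
    rw [Matrix.mul_apply, Matrix.one_apply]
    simp only [Matrix.transpose_apply]; simp only [hU, uMinus]
    have hterm : ∀ j : Fin (t+1),
        (Real.sqrt (2/((t:ℝ)+1)) * Real.cos ((((k:ℕ)+1 : ℕ):ℝ) * π * (((j:ℕ):ℝ)+1/2)/((t:ℝ)+1)))
        * (Real.sqrt (2/((t:ℝ)+1)) * Real.cos ((((l:ℕ)+1 : ℕ):ℝ) * π * (((j:ℕ):ℝ)+1/2)/((t:ℝ)+1)))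
        = (2/((t:ℝ)+1)) * (Real.cos ((((k:ℕ)+1 : ℕ):ℝ) * π * (((j:ℕ):ℝ)+1/2)/((t:ℝ)+1))
          * Real.cos ((((l:ℕ)+1 : ℕ):ℝ) * π * (((j:ℕ):ℝ)+1/2)/((t:ℝ)+1))) := by
      intro j; rw [hprod2, hc]
    rw [Finset.sum_congr rfl (fun j _ => hterm j), ← Finset.mul_sum]
    rw [Fin.sum_univ_eq_sum_range (fun m => Real.cos ((((k:ℕ)+1 : ℕ):ℝ) * π * ((m:ℝ)+1/2)/((t:ℝ)+1))
          * Real.cos ((((l:ℕ)+1 : ℕ):ℝ) * π * ((m:ℝ)+1/2)/((t:ℝ)+1))) (t+1)]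
    rw [cosOrtho t ((k:ℕ)+1) ((l:ℕ)+1) (Nat.succ_le_succ (Nat.zero_le _)) k.isLt
          (Nat.succ_le_succ (Nat.zero_le _)) l.isLt]
    by_cases hkl : k = l
    · simp only [hkl, if_pos rfl, ↓reduceIte]
      field_simp
    · have hne2 : ¬ ((k:ℕ)+1 = (l:ℕ)+1) := by
        simp only [add_left_inj]
        exact fun h => hkl (Fin.ext h)
      simp [hkl, hne2, Fin.val_inj]
  -- singular values positive
  have hsig : ∀ k : Fin t, 0 < 2 * Real.sin ((((k : ℕ) : ℝ) + 1) * Real.pi / (2 * (t : ℝ) + 2)) := by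
    intro k
    have hk : ((k:ℕ):ℝ) + 1 < 2*(t:ℝ) + 2 := by
      have h := k.isLt
      have h2 : ((k:ℕ):ℝ) < (t:ℝ) := by exact_mod_cast h
      linarith
    have h1 : 0 < Real.sin ((((k : ℕ) : ℝ) + 1) * Real.pi / (2 * (t : ℝ) + 2)) := by
      apply Real.sin_pos_of_pos_of_lt_pi
      · positivity
      · rw [div_lt_iff₀ (by positivity)]
        nlinarith [Real.pi_pos]
    linarith
  -- the key product identity
  have hKW : Kminus t * W = Uhat * S := by
    ext i k
    rw [Matrix.mul_apply, hS, Matrix.mul_diagonal, hU]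
    simp only [hW, vDST, uMinus, Kminus]
    set c := Real.sqrt (2/((t:ℝ)+1)) with hcc
    set p : ℕ → ℝ := fun m => if (i:ℕ) = m then -(c * Real.sin ((((k:ℕ)+1 : ℕ):ℝ) * π * (m:ℝ) / ((t:ℝ)+1))) else 0 with hp
    have hsum : ∑ j : Fin t, (if (i:ℕ) = (j:ℕ) then (-1:ℝ) else if (i:ℕ) = (j:ℕ)+1 then 1 else 0)
          * -(c * Real.sin ((((k:ℕ)+1 : ℕ):ℝ) * π * (((j:ℕ):ℝ)+1)/((t:ℝ)+1)))
        = c * Real.sin ((((k:ℕ)+1 : ℕ):ℝ) * π * (((i:ℕ):ℝ)+1)/((t:ℝ)+1))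
          - c * Real.sin ((((k:ℕ)+1 : ℕ):ℝ) * π * ((i:ℕ):ℝ)/((t:ℝ)+1)) := by
      rw [Fin.sum_univ_eq_sum_range (fun j => (if (i:ℕ) = j then (-1:ℝ) else if (i:ℕ) = j+1 then 1 else 0)
            * -(c * Real.sin ((((k:ℕ)+1 : ℕ):ℝ) * π * ((j:ℝ)+1)/((t:ℝ)+1)))) t]
      have hsplit : ∀ j ∈ Finset.range t,
          (if (i:ℕ) = j then (-1:ℝ) else if (i:ℕ) = j+1 then 1 else 0)
            * -(c * Real.sin ((((k:ℕ)+1 : ℕ):ℝ) * π * ((j:ℝ)+1)/((t:ℝ)+1)))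
          = (if (i:ℕ) = j then c * Real.sin ((((k:ℕ)+1 : ℕ):ℝ) * π * ((j:ℝ)+1)/((t:ℝ)+1)) else 0)
            + p (j+1) := by
        intro j _
        have hpj : p (j+1) = if (i:ℕ) = j+1
            then -(c * Real.sin ((((k:ℕ)+1 : ℕ):ℝ) * π * (((j+1 : ℕ)):ℝ) / ((t:ℝ)+1))) else 0 := rfl
        by_cases h1 : (i:ℕ) = j
        · have h2 : ¬ (i:ℕ) = j+1 := by omega
          rw [hpj, if_pos h1, if_pos h1, if_neg h2]
          ring
        · by_cases h2 : (i:ℕ) = j+1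
          · rw [hpj, if_neg h1, if_neg h1, if_pos h2, if_pos h2]
            push_cast
            ring
          · rw [hpj, if_neg h1, if_neg h1, if_neg h2, if_neg h2]
            ring
      rw [Finset.sum_congr rfl hsplit, Finset.sum_add_distrib]
      have e1 : ∑ j ∈ Finset.range t,
          (if (i:ℕ) = j then c * Real.sin ((((k:ℕ)+1 : ℕ):ℝ) * π * ((j:ℝ)+1)/((t:ℝ)+1)) else 0)
          = c * Real.sin ((((k:ℕ)+1 : ℕ):ℝ) * π * (((i:ℕ):ℝ)+1)/((t:ℝ)+1)) := by
        rw [Finset.sum_ite_eq]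
        by_cases hi : (i:ℕ) ∈ Finset.range t
        · rw [if_pos hi]
        · rw [if_neg hi]
          have hit : (i:ℕ) = t := by
            have := i.isLt
            simp only [Finset.mem_range] at hi
            omega
          have : ((((k:ℕ)+1 : ℕ):ℝ) * π * (((i:ℕ):ℝ)+1)/((t:ℝ)+1)) = (((k:ℕ)+1 : ℕ):ℝ) * π := by
            rw [hit]; field_simp
          rw [this, Real.sin_nat_mul_pi]
          ring
      have e2 : ∑ j ∈ Finset.range t, p (j+1)
          = - (c * Real.sin ((((k:ℕ)+1 : ℕ):ℝ) * π * ((i:ℕ):ℝ)/((t:ℝ)+1))) := by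
        have h0 : ∑ j ∈ Finset.range (t+1), p j = (∑ j ∈ Finset.range t, p (j+1)) + p 0 :=
          Finset.sum_range_succ' p t
        have hp0 : p 0 = 0 := by
          simp only [hp]
          by_cases h : (i:ℕ) = 0 <;> simp [h]
        have hfull : ∑ j ∈ Finset.range (t+1), p j
            = -(c * Real.sin ((((k:ℕ)+1 : ℕ):ℝ) * π * ((i:ℕ):ℝ)/((t:ℝ)+1))) := by
          rw [hp]
          rw [Finset.sum_ite_eq]
          rw [if_pos (Finset.mem_range.mpr i.isLt)]
        rw [hfull, hp0, add_zero] at h0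
        linarith [h0]
      rw [e1, e2]
      ring
    rw [hsum]
    -- final trig identity
    have h := Real.sin_sub_sin ((((k:ℕ)+1 : ℕ):ℝ) * π * (((i:ℕ):ℝ)+1)/((t:ℝ)+1))
      ((((k:ℕ)+1 : ℕ):ℝ) * π * ((i:ℕ):ℝ)/((t:ℝ)+1))
    have a1 : ((((k:ℕ)+1 : ℕ):ℝ) * π * (((i:ℕ):ℝ)+1)/((t:ℝ)+1)
        - (((k:ℕ)+1 : ℕ):ℝ) * π * ((i:ℕ):ℝ)/((t:ℝ)+1))/2
        = (((k:ℕ):ℝ)+1) * π / (2*(t:ℝ)+2) := by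
      push_cast
      field_simp
      ring
    have a2 : ((((k:ℕ)+1 : ℕ):ℝ) * π * (((i:ℕ):ℝ)+1)/((t:ℝ)+1)
        + (((k:ℕ)+1 : ℕ):ℝ) * π * ((i:ℕ):ℝ)/((t:ℝ)+1))/2
        = (((k:ℕ)+1 : ℕ):ℝ) * π * (((i:ℕ):ℝ)+1/2)/((t:ℝ)+1) := by
      push_cast
      field_simp
      ring
    rw [a1, a2] at h
    calc c * Real.sin ((((k:ℕ)+1 : ℕ):ℝ) * π * (((i:ℕ):ℝ)+1)/((t:ℝ)+1))
          - c * Real.sin ((((k:ℕ)+1 : ℕ):ℝ) * π * ((i:ℕ):ℝ)/((t:ℝ)+1))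
        = c * (Real.sin ((((k:ℕ)+1 : ℕ):ℝ) * π * (((i:ℕ):ℝ)+1)/((t:ℝ)+1))
          - Real.sin ((((k:ℕ)+1 : ℕ):ℝ) * π * ((i:ℕ):ℝ)/((t:ℝ)+1))) := by ring
      _ = c * (2 * Real.sin ((((k:ℕ):ℝ)+1) * π / (2*(t:ℝ)+2))
          * Real.cos ((((k:ℕ)+1 : ℕ):ℝ) * π * (((i:ℕ):ℝ)+1/2)/((t:ℝ)+1))) := by rw [h]
      _ = c * Real.cos ((((k:ℕ)+1 : ℕ):ℝ) * π * (((i:ℕ):ℝ)+1/2)/((t:ℝ)+1))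
          * (2 * Real.sin ((((k:ℕ):ℝ)+1) * π / (2*(t:ℝ)+2))) := by ring
  refine ⟨hWW, hWWT, hUU, hsig, ?_⟩
  calc Kminus t = Kminus t * (W * Wᵀ) := by rw [hWWT, Matrix.mul_one]
    _ = (Kminus t * W) * Wᵀ := by rw [Matrix.mul_assoc]
    _ = Uhat * S * Wᵀ := by rw [hKW]
end

section
/- Let n ≥ 1, N = 2^n, M = N/2. For every p ∈ {0,1,2,3} and all integers k₁, k₂ with 1 ≤ k₁, k₂ ≤ M, the level-one full ADRT satisfies ‖S_{(1)} v^{(p)}_{(k₁,k₂)}‖² = σ² · ‖v^{(p)}_{(k₁,k₂)}‖², where σ² = 8 + 2cos²(k₁π/(N+2)) + 2cos²(k₂π/(N+2)) if p ∈ {0,2}, and σ² = 4 + 2sin²(k₁π/(N+2)) + 2sin²(k₂π/(N+2)) if p ∈ {1,3}. Here ‖v‖² denotes the sum of squares of entries of v ∈ ℝ^{N×N}, and ‖S_{(1)}f‖² := Σ_{q ∈ {I,II,III,IV}} Σ_{(h,s)} ((S(T_q f))(h,s))². -/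
open Real

/-- The `2 × 2` block pattern of type `p` at offset `(a, b) ∈ {0,1}²`. -/
noncomputable def blockPat (p : Fin 4) (a b : ℕ) : ℝ :=
  if p = 0 then (if a = 0 ∧ b = 0 then 1 else if a = 1 ∧ b = 1 then 1 else 0)
  else if p = 1 then (if a = 0 ∧ b = 0 then -1 else if a = 1 ∧ b = 1 then 1 else 0)
  else if p = 2 then (if a = 0 ∧ b = 1 then 1 else if a = 1 ∧ b = 0 then 1 else 0)
  else (if a = 0 ∧ b = 1 then -1 else if a = 1 ∧ b = 0 then 1 else 0)

/-- The block image `χ^{(p)}_{(j₁, j₂)} ∈ ℝ^{N×N}`, supported on the `2 × 2` block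
`{2j₁, 2j₁+1} × {2j₂, 2j₂+1}`, with pattern of type `p` on that block. -/
noncomputable def chi (N : ℕ) (p : Fin 4) (j₁ j₂ : ℕ) : Fin N → Fin N → ℝ :=
  fun i₁ i₂ =>
    if (i₁ : ℕ) / 2 = j₁ ∧ (i₂ : ℕ) / 2 = j₂ then blockPat p ((i₁ : ℕ) % 2) ((i₂ : ℕ) % 2)
    else 0

/-- Zero extension of an `N × N` image to a function on `ℤ × ℤ`. -/
noncomputable def extend (N : ℕ) (f : Fin N → Fin N → ℝ) : ℤ → ℤ → ℝ :=
  fun i₁ i₂ =>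
    if h : 0 ≤ i₁ ∧ i₁ < (N : ℤ) ∧ 0 ≤ i₂ ∧ i₂ < (N : ℤ) then
      f ⟨i₁.toNat, by omega⟩ ⟨i₂.toNat, by omega⟩
    else 0

/-- The level-one single-quadrant ADRT `S`:
`(Sf)(h, 2ℓ) = f(h, 2ℓ) + f(h, 2ℓ+1)` and `(Sf)(h, 2ℓ+1) = f(h, 2ℓ) + f(h+1, 2ℓ+1)`. -/
noncomputable def adrtS (g : ℤ → ℤ → ℝ) : ℤ → ℤ → ℝ :=
  fun h s => if s % 2 = 0 then g h s + g h (s + 1) else g h (s - 1) + g (h + 1) s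

/-- Quadrant permutation `T_I`. -/
noncomputable def TI (N : ℕ) (f : Fin N → Fin N → ℝ) : Fin N → Fin N → ℝ :=
  fun i₁ i₂ => f i₂ i₁.rev

/-- Quadrant permutation `T_II`. -/
noncomputable def TII (N : ℕ) (f : Fin N → Fin N → ℝ) : Fin N → Fin N → ℝ :=
  fun i₁ i₂ => f i₁.rev i₂

/-- Quadrant permutation `T_III` (the identity). -/
noncomputable def TIII (N : ℕ) (f : Fin N → Fin N → ℝ) : Fin N → Fin N → ℝ := f

/-- Quadrant permutation `T_IV`. -/
noncomputable def TIV (N : ℕ) (f : Fin N → Fin N → ℝ) : Fin N → Fin N → ℝ :=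
  fun i₁ i₂ => f i₂.rev i₁.rev

/-- Squared norm of the single-quadrant ADRT data `S f`, summing over
`s ∈ {0, …, N−1}` and `h ∈ {−1, …, N−1}`. -/
noncomputable def normSqQuad (N : ℕ) (f : Fin N → Fin N → ℝ) : ℝ :=
  ∑ s ∈ Finset.range N, ∑ h ∈ Finset.Icc (-1 : ℤ) ((N : ℤ) - 1),
    (adrtS (extend N f) h (s : ℤ)) ^ 2

/-- Squared norm of the level-one full ADRT data, `‖S_{(1)} f‖²`, summing over the
four quadrants. -/
noncomputable def normSqFull (N : ℕ) (f : Fin N → Fin N → ℝ) : ℝ :=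
  normSqQuad N (TI N f) + normSqQuad N (TII N f) +
    normSqQuad N (TIII N f) + normSqQuad N (TIV N f)

/-- The block-sinusoidal image `v^{(p)}_{(k₁,k₂)} = Σ_{(j₁,j₂)} φ_{(k₁,k₂)}(j₁,j₂) χ^{(p)}_{(j₁,j₂)}`. -/
noncomputable def vpk (N M : ℕ) (p : Fin 4) (k₁ k₂ : ℕ) : Fin N → Fin N → ℝ :=
  fun i₁ i₂ =>
    ∑ j₁ ∈ Finset.range M, ∑ j₂ ∈ Finset.range M,
      (Real.sin ((k₁ : ℝ) * Real.pi * ((j₁ : ℕ) + 1) / ((M : ℝ) + 1)) *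
        Real.sin ((k₂ : ℝ) * Real.pi * ((j₂ : ℕ) + 1) / ((M : ℝ) + 1))) *
        chi N p j₁ j₂ i₁ i₂


lemma sum_range_double (M : ℕ) (f : ℕ → ℝ) :
    ∑ s ∈ Finset.range (2*M), f s = ∑ l ∈ Finset.range M, (f (2*l) + f (2*l+1)) := by
  induction M with
  | zero => simp
  | succ m ih =>
      rw [show 2*(m+1) = (2*m)+1+1 by ring, Finset.sum_range_succ, Finset.sum_range_succ, ih,
        Finset.sum_range_succ]
      ring

lemma sum_Icc_neg_one (m : ℕ) (f : ℤ → ℝ) :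
    ∑ h ∈ Finset.Icc (-1 : ℤ) ((m:ℤ) - 1), f h = ∑ k ∈ Finset.range (m+1), f ((k:ℤ) - 1) := by
  have : Finset.Icc (-1 : ℤ) ((m:ℤ) - 1)
      = Finset.map ⟨fun k : ℕ => (k:ℤ) - 1, by intro a b h; simpa using h⟩ (Finset.range (m+1)) := by
    ext x
    simp only [Finset.mem_Icc, Finset.mem_map, Finset.mem_range, Function.Embedding.coeFn_mk]
    constructor
    · rintro ⟨h1, h2⟩
      exact ⟨(x+1).toNat, by omega, by show (((x+1).toNat : ℕ) : ℤ) - 1 = x; omega⟩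
    · rintro ⟨k, hk, rfl⟩
      show -1 ≤ (k:ℤ) - 1 ∧ (k:ℤ) - 1 ≤ (m:ℤ) - 1
      omega
  rw [this, Finset.sum_map]
  rfl

lemma sum_Icc_split (M : ℕ) (f : ℤ → ℝ) :
    ∑ h ∈ Finset.Icc (-1 : ℤ) (((2*M : ℕ):ℤ) - 1), f h
      = f (-1) + ∑ j ∈ Finset.range M, (f (2*(j:ℤ)) + f (2*(j:ℤ)+1)) := by
  rw [sum_Icc_neg_one, Finset.sum_range_succ']
  have h1 : ∀ k : ℕ, f (((k+1 : ℕ):ℤ) - 1) = f (k:ℤ) := by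
    intro k; congr 1; push_cast; ring
  simp only [h1]
  rw [sum_range_double M (fun k => f (k:ℤ))]
  have h0 : f (((0:ℕ):ℤ) - 1) = f (-1) := by norm_num
  rw [h0]
  have h2 : ∀ j : ℕ, f ((2*j : ℕ):ℤ) = f (2*(j:ℤ)) := by intro j; norm_cast
  have h3 : ∀ j : ℕ, f ((2*j+1 : ℕ):ℤ) = f (2*(j:ℤ)+1) := by intro j; norm_cast
  simp only [h2, h3]
  ring

noncomputable def gB (M : ℕ) (w : ℕ → ℕ → ℝ) (c : ℕ → ℕ → ℝ) : ℤ → ℤ → ℝ :=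
  fun i₁ i₂ =>
    if 0 ≤ i₁ ∧ i₁ < 2*(M:ℤ) ∧ 0 ≤ i₂ ∧ i₂ < 2*(M:ℤ) then
      c (i₁.toNat / 2) (i₂.toNat / 2) * w (i₁.toNat % 2) (i₂.toNat % 2)
    else 0

lemma adrtS_even (g : ℤ → ℤ → ℝ) (h : ℤ) (l : ℕ) :
    adrtS g h ((2*l : ℕ) : ℤ) = g h (2*(l:ℤ)) + g h (2*(l:ℤ)+1) := by
  unfold adrtS
  rw [if_pos (by omega)]
  norm_cast

lemma adrtS_odd (g : ℤ → ℤ → ℝ) (h : ℤ) (l : ℕ) :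
    adrtS g h ((2*l+1 : ℕ) : ℤ) = g h (2*(l:ℤ)) + g (h+1) (2*(l:ℤ)+1) := by
  unfold adrtS
  rw [if_neg (by omega)]
  have e1 : ((2*l+1 : ℕ) : ℤ) - 1 = 2*(l:ℤ) := by push_cast; ring
  have e2 : ((2*l+1 : ℕ) : ℤ) = 2*(l:ℤ)+1 := by push_cast; ring
  rw [e1, e2]

lemma gB_apply (M : ℕ) (w c : ℕ → ℕ → ℝ) {j l a b : ℕ}
    (hj : j < M) (hl : l < M) (ha : a < 2) (hb : b < 2) :
    gB M w c (2*(j:ℤ)+(a:ℤ)) (2*(l:ℤ)+(b:ℤ)) = c j l * w a b := by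
  unfold gB
  rw [if_pos (by omega)]
  have e1 : (2*(j:ℤ)+(a:ℤ)).toNat = 2*j+a := by omega
  have e2 : (2*(l:ℤ)+(b:ℤ)).toNat = 2*l+b := by omega
  rw [e1, e2]
  have d1 : (2*j+a)/2 = j := by omega
  have d2 : (2*l+b)/2 = l := by omega
  have m1 : (2*j+a)%2 = a := by omega
  have m2 : (2*l+b)%2 = b := by omega
  rw [d1, d2, m1, m2]

lemma gB00 (M : ℕ) (w c : ℕ → ℕ → ℝ) {j l : ℕ} (hj : j < M) (hl : l < M) :
    gB M w c (2*(j:ℤ)) (2*(l:ℤ)) = c j l * w 0 0 := by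
  have := gB_apply M w c hj hl (by norm_num : (0:ℕ) < 2) (by norm_num : (0:ℕ) < 2)
  simpa using this

lemma gB01 (M : ℕ) (w c : ℕ → ℕ → ℝ) {j l : ℕ} (hj : j < M) (hl : l < M) :
    gB M w c (2*(j:ℤ)) (2*(l:ℤ)+1) = c j l * w 0 1 := by
  have := gB_apply M w c hj hl (by norm_num : (0:ℕ) < 2) (by norm_num : (1:ℕ) < 2)
  simpa using this

lemma gB10 (M : ℕ) (w c : ℕ → ℕ → ℝ) {j l : ℕ} (hj : j < M) (hl : l < M) :
    gB M w c (2*(j:ℤ)+1) (2*(l:ℤ)) = c j l * w 1 0 := by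
  have := gB_apply M w c hj hl (by norm_num : (1:ℕ) < 2) (by norm_num : (0:ℕ) < 2)
  simpa using this

lemma gB11 (M : ℕ) (w c : ℕ → ℕ → ℝ) {j l : ℕ} (hj : j < M) (hl : l < M) :
    gB M w c (2*(j:ℤ)+1) (2*(l:ℤ)+1) = c j l * w 1 1 := by
  have := gB_apply M w c hj hl (by norm_num : (1:ℕ) < 2) (by norm_num : (1:ℕ) < 2)
  simpa using this

lemma gB_neg (M : ℕ) (w c : ℕ → ℕ → ℝ) (i : ℤ) : gB M w c (-1) i = 0 := by
  unfold gB; rw [if_neg (by omega)]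

lemma gB_top (M : ℕ) (w c : ℕ → ℕ → ℝ) (i : ℤ) : gB M w c (2*(M:ℤ)) i = 0 := by
  unfold gB; rw [if_neg (by omega)]

lemma even_part (M : ℕ) (w c : ℕ → ℕ → ℝ) {l : ℕ} (hl : l < M) :
    ∑ h ∈ Finset.Icc (-1:ℤ) (((2*M : ℕ):ℤ) - 1), (adrtS (gB M w c) h ((2*l : ℕ):ℤ))^2
      = ((w 0 0 + w 0 1)^2 + (w 1 0 + w 1 1)^2) * ∑ j ∈ Finset.range M, (c j l)^2 := by
  have he : ∀ h : ℤ, (adrtS (gB M w c) h ((2*l : ℕ):ℤ))^2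
      = (gB M w c h (2*(l:ℤ)) + gB M w c h (2*(l:ℤ)+1))^2 := by
    intro h; rw [adrtS_even]
  simp only [he]
  rw [sum_Icc_split]
  rw [gB_neg, gB_neg]
  norm_num
  rw [Finset.sum_congr rfl (fun j hj => ?_), ← Finset.sum_mul, mul_comm]
  have hjM := Finset.mem_range.1 hj
  rw [gB00 M w c hjM hl, gB01 M w c hjM hl, gB10 M w c hjM hl, gB11 M w c hjM hl]
  ring

lemma aux_alg (m : ℕ) (d : ℕ → ℝ) (x y : ℝ) :
    (d 0 * y)^2 + (∑ j ∈ Finset.range m, (d j * x + d (j+1) * y)^2) + (d m * x)^2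
    = (x^2 + y^2) * ∑ j ∈ Finset.range (m+1), (d j)^2
      + 2*y*x * ∑ j ∈ Finset.range m, d j * d (j+1) := by
  have h1 : ∑ j ∈ Finset.range (m+1), (d j)^2 = (∑ j ∈ Finset.range m, (d j)^2) + (d m)^2 :=
    Finset.sum_range_succ _ m
  have h2 : ∑ j ∈ Finset.range (m+1), (d j)^2 = (∑ j ∈ Finset.range m, (d (j+1))^2) + (d 0)^2 :=
    Finset.sum_range_succ' _ m
  have h3 : ∑ j ∈ Finset.range m, (d j * x + d (j+1) * y)^2
      = x^2 * (∑ j ∈ Finset.range m, (d j)^2) + y^2 * (∑ j ∈ Finset.range m, (d (j+1))^2)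
        + 2*y*x * ∑ j ∈ Finset.range m, d j * d (j+1) := by
    rw [Finset.mul_sum, Finset.mul_sum, Finset.mul_sum, ← Finset.sum_add_distrib,
      ← Finset.sum_add_distrib]
    exact Finset.sum_congr rfl (fun j _ => by ring)
  linear_combination h3 - x^2 * h1 - y^2 * h2

lemma odd_part (M : ℕ) (hM : 1 ≤ M) (w c : ℕ → ℕ → ℝ) {l : ℕ} (hl : l < M) :
    ∑ h ∈ Finset.Icc (-1:ℤ) (((2*M : ℕ):ℤ) - 1), (adrtS (gB M w c) h ((2*l+1 : ℕ):ℤ))^2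
      = ((w 0 0 + w 1 1)^2 + (w 1 0)^2 + (w 0 1)^2) * (∑ j ∈ Finset.range M, (c j l)^2)
        + 2*(w 0 1)*(w 1 0) * ∑ j ∈ Finset.range (M-1), c j l * c (j+1) l := by
  obtain ⟨m, rfl⟩ : ∃ m, M = m + 1 := ⟨M-1, by omega⟩
  have he : ∀ h : ℤ, (adrtS (gB (m+1) w c) h ((2*l+1 : ℕ):ℤ))^2
      = (gB (m+1) w c h (2*(l:ℤ)) + gB (m+1) w c (h+1) (2*(l:ℤ)+1))^2 := by
    intro h; rw [adrtS_odd]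
  simp only [he]
  rw [sum_Icc_split]
  -- boundary term
  rw [gB_neg]
  have hb : gB (m+1) w c (-1+1) (2*(l:ℤ)+1) = c 0 l * w 0 1 := by
    have := gB01 (m+1) w c (Nat.succ_pos m) hl
    simpa using this
  rw [hb]
  -- split each j-term
  have hterm : ∀ j ∈ Finset.range (m+1),
      (gB (m+1) w c (2*(j:ℤ)) (2*(l:ℤ)) + gB (m+1) w c (2*(j:ℤ)+1) (2*(l:ℤ)+1))^2
        + (gB (m+1) w c (2*(j:ℤ)+1) (2*(l:ℤ)) + gB (m+1) w c (2*(j:ℤ)+1+1) (2*(l:ℤ)+1))^2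
      = (c j l * (w 0 0 + w 1 1))^2
        + (c j l * w 1 0 + (if j < m then c (j+1) l else 0) * w 0 1)^2 := by
    intro j hj
    have hjM := Finset.mem_range.1 hj
    rw [gB00 (m+1) w c hjM hl, gB11 (m+1) w c hjM hl, gB10 (m+1) w c hjM hl]
    by_cases hjm : j < m
    · have h2 : (2*(j:ℤ)+1+1) = 2*((j+1 : ℕ):ℤ) := by push_cast; ring
      rw [h2, gB01 (m+1) w c (by omega) hl, if_pos hjm]
      ring
    · have hjeq : j = m := by omega
      subst hjeq
      have h2 : (2*(j:ℤ)+1+1) = 2*(((j+1 : ℕ)):ℤ) := by push_cast; ring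
      rw [h2]
      have h3 : ((j+1 : ℕ):ℤ) = ((j:ℕ)+1 :ℤ) := by push_cast; ring
      have htop : gB (j+1) w c (2*((j+1 : ℕ):ℤ)) (2*(l:ℤ)+1) = 0 := by
        have := gB_top (j+1) w c (2*(l:ℤ)+1)
        exact_mod_cast this
      rw [htop, if_neg hjm]
      ring
  rw [Finset.sum_congr rfl hterm, Finset.sum_add_distrib]
  -- now pure algebra
  have hsplit : ∑ j ∈ Finset.range (m+1),
      (c j l * w 1 0 + (if j < m then c (j+1) l else 0) * w 0 1)^2
      = (∑ j ∈ Finset.range m, (c j l * (w 1 0) + c (j+1) l * (w 0 1))^2)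
        + (c m l * (w 1 0))^2 := by
    rw [Finset.sum_range_succ, if_neg (lt_irrefl m)]
    congr 1
    · exact Finset.sum_congr rfl (fun j hj => by rw [if_pos (Finset.mem_range.1 hj)])
    · ring_nf
  rw [hsplit]
  have hfirst : ∑ j ∈ Finset.range (m+1), (c j l * (w 0 0 + w 1 1))^2
      = (w 0 0 + w 1 1)^2 * ∑ j ∈ Finset.range (m+1), (c j l)^2 := by
    rw [Finset.mul_sum]; exact Finset.sum_congr rfl (fun j _ => by ring)
  have halg := aux_alg m (fun j => c j l) (w 1 0) (w 0 1)
  have hm1 : (m+1) - 1 = m := by omega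
  rw [hm1]
  linear_combination hfirst + halg

lemma quadNorm_gB (M : ℕ) (hM : 1 ≤ M) (w c : ℕ → ℕ → ℝ) :
    ∑ s ∈ Finset.range (2*M), ∑ h ∈ Finset.Icc (-1:ℤ) (((2*M : ℕ):ℤ) - 1),
        (adrtS (gB M w c) h (s:ℤ))^2
    = ((w 0 0 + w 0 1)^2 + (w 1 0 + w 1 1)^2 + (w 0 0 + w 1 1)^2 + (w 1 0)^2 + (w 0 1)^2)
        * (∑ l ∈ Finset.range M, ∑ j ∈ Finset.range M, (c j l)^2)
      + 2 * (w 0 1) * (w 1 0) *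
        (∑ l ∈ Finset.range M, ∑ j ∈ Finset.range (M-1), c j l * c (j+1) l) := by
  rw [sum_range_double M (fun s => ∑ h ∈ Finset.Icc (-1:ℤ) (((2*M : ℕ):ℤ) - 1),
        (adrtS (gB M w c) h (s:ℤ))^2)]
  rw [Finset.mul_sum, Finset.mul_sum, ← Finset.sum_add_distrib]
  refine Finset.sum_congr rfl (fun l hl => ?_)
  have hlM := Finset.mem_range.1 hl
  rw [even_part M w c hlM, odd_part M hM w c hlM]
  ring



noncomputable def sf (M k : ℕ) (j : ℕ) : ℝ :=
  Real.sin ((k : ℝ) * Real.pi * ((j : ℝ) + 1) / ((M : ℝ) + 1))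

noncomputable def phi (M k₁ k₂ : ℕ) (j l : ℕ) : ℝ := sf M k₁ j * sf M k₂ l

lemma vpk_apply (N M : ℕ) (hNM : N = 2*M) (p : Fin 4) (k₁ k₂ : ℕ) (a b : Fin N) :
    vpk N M p k₁ k₂ a b
      = phi M k₁ k₂ ((a:ℕ)/2) ((b:ℕ)/2) * blockPat p ((a:ℕ)%2) ((b:ℕ)%2) := by
  have ha : (a:ℕ)/2 ∈ Finset.range M := Finset.mem_range.2 (by have := a.isLt; omega)
  have hb : (b:ℕ)/2 ∈ Finset.range M := Finset.mem_range.2 (by have := b.isLt; omega)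
  unfold vpk chi phi sf
  rw [Finset.sum_eq_single_of_mem ((a:ℕ)/2) ha ?_]
  · rw [Finset.sum_eq_single_of_mem ((b:ℕ)/2) hb ?_]
    · rw [if_pos ⟨rfl, rfl⟩]
    · intro j _ hj
      rw [if_neg (by tauto), mul_zero]
  · intro j _ hj
    exact Finset.sum_eq_zero (fun j₂ _ => by rw [if_neg (by tauto), mul_zero])


lemma extend_eq_gB (M : ℕ) (f : Fin (2*M) → Fin (2*M) → ℝ) (w c : ℕ → ℕ → ℝ)
    (hf : ∀ a b : Fin (2*M), f a b = c ((a:ℕ)/2) ((b:ℕ)/2) * w ((a:ℕ)%2) ((b:ℕ)%2)) :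
    extend (2*M) f = gB M w c := by
  funext i₁ i₂
  unfold extend gB
  by_cases hc : 0 ≤ i₁ ∧ i₁ < ((2*M:ℕ):ℤ) ∧ 0 ≤ i₂ ∧ i₂ < ((2*M:ℕ):ℤ)
  · rw [dif_pos hc, if_pos (by push_cast at hc ⊢; omega)]
    exact hf _ _
  · rw [dif_neg hc, if_neg (by push_cast at hc ⊢; omega)]

lemma extend_TIII (M : ℕ) (p : Fin 4) (k₁ k₂ : ℕ) :
    extend (2*M) (TIII (2*M) (vpk (2*M) M p k₁ k₂))
      = gB M (fun a b => blockPat p a b) (fun j l => phi M k₁ k₂ j l) := by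
  apply extend_eq_gB
  intro a b
  exact vpk_apply (2*M) M rfl p k₁ k₂ a b

lemma rev_div (M x : ℕ) (hx : x < 2*M) : (2*M - (x+1))/2 = M - 1 - x/2 := by omega
lemma rev_mod (M x : ℕ) (hx : x < 2*M) : (2*M - (x+1))%2 = 1 - x%2 := by omega

lemma extend_TII (M : ℕ) (p : Fin 4) (k₁ k₂ : ℕ) :
    extend (2*M) (TII (2*M) (vpk (2*M) M p k₁ k₂))
      = gB M (fun a b => blockPat p (1-a) b) (fun j l => phi M k₁ k₂ (M-1-j) l) := by
  apply extend_eq_gB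
  intro a b
  show vpk (2*M) M p k₁ k₂ a.rev b = _
  rw [vpk_apply (2*M) M rfl p k₁ k₂ a.rev b, Fin.val_rev,
    rev_div M a a.isLt, rev_mod M a a.isLt]

lemma extend_TI (M : ℕ) (p : Fin 4) (k₁ k₂ : ℕ) :
    extend (2*M) (TI (2*M) (vpk (2*M) M p k₁ k₂))
      = gB M (fun a b => blockPat p b (1-a)) (fun j l => phi M k₁ k₂ l (M-1-j)) := by
  apply extend_eq_gB
  intro a b
  show vpk (2*M) M p k₁ k₂ b a.rev = _
  rw [vpk_apply (2*M) M rfl p k₁ k₂ b a.rev, Fin.val_rev,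
    rev_div M a a.isLt, rev_mod M a a.isLt]

lemma extend_TIV (M : ℕ) (p : Fin 4) (k₁ k₂ : ℕ) :
    extend (2*M) (TIV (2*M) (vpk (2*M) M p k₁ k₂))
      = gB M (fun a b => blockPat p (1-b) (1-a)) (fun j l => phi M k₁ k₂ (M-1-l) (M-1-j)) := by
  apply extend_eq_gB
  intro a b
  show vpk (2*M) M p k₁ k₂ b.rev a.rev = _
  rw [vpk_apply (2*M) M rfl p k₁ k₂ b.rev a.rev, Fin.val_rev, Fin.val_rev,
    rev_div M a a.isLt, rev_mod M a a.isLt, rev_div M b b.isLt, rev_mod M b b.isLt]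


lemma prod_sum (A B : ℕ) (F G : ℕ → ℝ) :
    ∑ l ∈ Finset.range B, ∑ j ∈ Finset.range A, F j * G l
      = (∑ j ∈ Finset.range A, F j) * (∑ l ∈ Finset.range B, G l) := by
  rw [Finset.sum_mul_sum, Finset.sum_comm]

lemma trig_sum (M k : ℕ) (hM : 1 ≤ M) :
    ∑ j ∈ Finset.range (M-1), sf M k j * sf M k (j+1)
      = Real.cos ((k:ℝ)*Real.pi/((M:ℝ)+1)) * ∑ j ∈ Finset.range M, (sf M k j)^2 := by
  obtain ⟨m, rfl⟩ : ∃ m, M = m + 1 := ⟨M-1, by omega⟩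
  set θ := (k:ℝ)*Real.pi/(((m+1:ℕ):ℝ)+1) with hθ
  set t : ℕ → ℝ := fun j => Real.sin ((j:ℝ)*θ) with ht
  have hden : ((m+1:ℕ):ℝ)+1 ≠ 0 := by push_cast; positivity
  have hsf : ∀ j : ℕ, sf (m+1) k j = t (j+1) := by
    intro j
    simp only [ht, sf]
    congr 1
    rw [hθ]
    push_cast
    field_simp
  have h0 : t 0 = 0 := by simp [ht]
  have hMtop : t (m+2) = 0 := by
    simp only [ht]
    have : ((m+2:ℕ):ℝ)*θ = (k:ℝ)*Real.pi := by
      rw [hθ]; push_cast; field_simp; ring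
    rw [this]
    exact Real.sin_nat_mul_pi k
  have hrec : ∀ j : ℕ, t j + t (j+2) = 2*Real.cos θ * t (j+1) := by
    intro j
    simp only [ht]
    have e1 : ((j:ℕ):ℝ)*θ = ((j:ℝ)+1)*θ - θ := by push_cast; ring
    have e2 : ((j+2:ℕ):ℝ)*θ = ((j:ℝ)+1)*θ + θ := by push_cast; ring
    have e3 : ((j+1:ℕ):ℝ)*θ = ((j:ℝ)+1)*θ := by push_cast; ring
    rw [e1, e2, e3, Real.sin_sub, Real.sin_add]
    ring
  have hkey : ∑ j ∈ Finset.range (m+1), t (j+1) * (t j + t (j+2))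
      = 2*Real.cos θ * ∑ j ∈ Finset.range (m+1), (t (j+1))^2 := by
    rw [Finset.mul_sum]
    exact Finset.sum_congr rfl (fun j _ => by rw [hrec j]; ring)
  have hs1 : ∑ j ∈ Finset.range (m+1), t (j+1) * t j
      = ∑ j ∈ Finset.range m, t (j+1) * t (j+2) := by
    rw [Finset.sum_range_succ']
    simp only [h0, mul_zero, add_zero]
    exact Finset.sum_congr rfl (fun j _ => by ring)
  have hs2 : ∑ j ∈ Finset.range (m+1), t (j+1) * t (j+2)
      = ∑ j ∈ Finset.range m, t (j+1) * t (j+2) := by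
    rw [Finset.sum_range_succ, hMtop]
    ring
  have hsplit : ∑ j ∈ Finset.range (m+1), t (j+1) * (t j + t (j+2))
      = (∑ j ∈ Finset.range (m+1), t (j+1) * t j)
        + ∑ j ∈ Finset.range (m+1), t (j+1) * t (j+2) := by
    rw [← Finset.sum_add_distrib]
    exact Finset.sum_congr rfl (fun j _ => by ring)
  have hgoal2 : 2 * ∑ j ∈ Finset.range m, t (j+1) * t (j+2)
      = 2*Real.cos θ * ∑ j ∈ Finset.range (m+1), (t (j+1))^2 := by
    rw [← hkey, hsplit, hs1, hs2]; ring
  have hm1 : (m+1) - 1 = m := by omega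
  rw [hm1]
  simp only [hsf]
  have e4 : ∀ j : ℕ, t (j+1) * t (j+1+1) = t (j+1) * t (j+2) := by intro j; norm_num
  simp only [e4]
  linarith [hgoal2]


lemma prod_sum' (A B : ℕ) (F G : ℕ → ℝ) :
    ∑ j ∈ Finset.range A, ∑ l ∈ Finset.range B, F j * G l
      = (∑ j ∈ Finset.range A, F j) * (∑ l ∈ Finset.range B, G l) :=
  (Finset.sum_mul_sum _ _ _ _).symm

lemma reflect_sq (M k : ℕ) :
    ∑ j ∈ Finset.range M, (sf M k (M-1-j))^2 = ∑ j ∈ Finset.range M, (sf M k j)^2 :=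
  Finset.sum_range_reflect (fun j => (sf M k j)^2) M

lemma reflect_prod (M k : ℕ) :
    ∑ j ∈ Finset.range (M-1), sf M k (M-1-j) * sf M k (M-1-(j+1))
      = ∑ j ∈ Finset.range (M-1), sf M k j * sf M k (j+1) := by
  rw [← Finset.sum_range_reflect (fun j => sf M k j * sf M k (j+1)) (M-1)]
  refine Finset.sum_congr rfl (fun j hj => ?_)
  have hj' := Finset.mem_range.1 hj
  rw [show M-1-(j+1) = M-1-1-j from by omega, show M-1-1-j+1 = M-1-j from by omega]
  ring

lemma fin_double_sum (n : ℕ) (F : ℕ → ℕ → ℝ) :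
    ∑ i₁ : Fin n, ∑ i₂ : Fin n, F i₁ i₂
      = ∑ i₁ ∈ Finset.range n, ∑ i₂ ∈ Finset.range n, F i₁ i₂ := by
  rw [← Fin.sum_univ_eq_sum_range (fun i₁ => ∑ i₂ ∈ Finset.range n, F i₁ i₂) n]
  exact Finset.sum_congr rfl (fun i _ => Fin.sum_univ_eq_sum_range _ n)

lemma vpk_norm (M : ℕ) (p : Fin 4) (k₁ k₂ : ℕ) :
    ∑ i₁ : Fin (2*M), ∑ i₂ : Fin (2*M), (vpk (2*M) M p k₁ k₂ i₁ i₂)^2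
      = ((blockPat p 0 0)^2 + (blockPat p 0 1)^2 + (blockPat p 1 0)^2 + (blockPat p 1 1)^2)
        * ((∑ j ∈ Finset.range M, (sf M k₁ j)^2) * (∑ l ∈ Finset.range M, (sf M k₂ l)^2)) := by
  have hv : ∀ a b : Fin (2*M), (vpk (2*M) M p k₁ k₂ a b)^2
      = (phi M k₁ k₂ ((a:ℕ)/2) ((b:ℕ)/2) * blockPat p ((a:ℕ)%2) ((b:ℕ)%2))^2 := by
    intro a b; rw [vpk_apply (2*M) M rfl p k₁ k₂ a b]
  simp only [hv]
  rw [fin_double_sum (2*M) (fun x y => (phi M k₁ k₂ (x/2) (y/2) * blockPat p (x%2) (y%2))^2)]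
  rw [sum_range_double M (fun x => ∑ y ∈ Finset.range (2*M),
    (phi M k₁ k₂ (x/2) (y/2) * blockPat p (x%2) (y%2))^2)]
  have hinner : ∀ x : ℕ, ∑ y ∈ Finset.range (2*M),
      (phi M k₁ k₂ (x/2) (y/2) * blockPat p (x%2) (y%2))^2
      = ∑ l ∈ Finset.range M, ((phi M k₁ k₂ (x/2) l * blockPat p (x%2) 0)^2
          + (phi M k₁ k₂ (x/2) l * blockPat p (x%2) 1)^2) := by
    intro x
    rw [sum_range_double M (fun y => (phi M k₁ k₂ (x/2) (y/2) * blockPat p (x%2) (y%2))^2)]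
    refine Finset.sum_congr rfl (fun l _ => ?_)
    rw [show (2*l)/2 = l from by omega, show (2*l)%2 = 0 from by omega,
      show (2*l+1)/2 = l from by omega, show (2*l+1)%2 = 1 from by omega]
  simp only [hinner]
  have hterm : ∀ j ∈ Finset.range M,
      (∑ l ∈ Finset.range M, ((phi M k₁ k₂ ((2*j)/2) l * blockPat p ((2*j)%2) 0)^2
          + (phi M k₁ k₂ ((2*j)/2) l * blockPat p ((2*j)%2) 1)^2))
      + (∑ l ∈ Finset.range M, ((phi M k₁ k₂ ((2*j+1)/2) l * blockPat p ((2*j+1)%2) 0)^2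
          + (phi M k₁ k₂ ((2*j+1)/2) l * blockPat p ((2*j+1)%2) 1)^2))
      = ∑ l ∈ Finset.range M, (sf M k₁ j)^2 * ((sf M k₂ l)^2
          * ((blockPat p 0 0)^2 + (blockPat p 0 1)^2 + (blockPat p 1 0)^2 + (blockPat p 1 1)^2)) := by
    intro j _
    rw [← Finset.sum_add_distrib]
    refine Finset.sum_congr rfl (fun l _ => ?_)
    rw [show (2*j)/2 = j from by omega, show (2*j)%2 = 0 from by omega,
      show (2*j+1)/2 = j from by omega, show (2*j+1)%2 = 1 from by omega]
    unfold phi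
    ring
  rw [Finset.sum_congr rfl hterm,
    prod_sum' M M (fun j => (sf M k₁ j)^2)
      (fun l => (sf M k₂ l)^2 * ((blockPat p 0 0)^2 + (blockPat p 0 1)^2
        + (blockPat p 1 0)^2 + (blockPat p 1 1)^2)),
    ← Finset.sum_mul]
  ring


lemma sum_sq_split (A B : ℕ) (u v : ℕ → ℝ) :
    ∑ l ∈ Finset.range B, ∑ j ∈ Finset.range A, (u j * v l)^2
      = (∑ j ∈ Finset.range A, (u j)^2) * (∑ l ∈ Finset.range B, (v l)^2) := by
  rw [← prod_sum A B (fun j => (u j)^2) (fun l => (v l)^2)]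
  exact Finset.sum_congr rfl (fun l _ => Finset.sum_congr rfl (fun j _ => by ring))

lemma sum_prod_split (A B : ℕ) (u u' v : ℕ → ℝ) :
    ∑ l ∈ Finset.range B, ∑ j ∈ Finset.range A, (u j * v l) * (u' j * v l)
      = (∑ j ∈ Finset.range A, u j * u' j) * (∑ l ∈ Finset.range B, (v l)^2) := by
  rw [← prod_sum A B (fun j => u j * u' j) (fun l => (v l)^2)]
  exact Finset.sum_congr rfl (fun l _ => Finset.sum_congr rfl (fun j _ => by ring))

lemma E_III (M k₁ k₂ : ℕ) :
    ∑ l ∈ Finset.range M, ∑ j ∈ Finset.range M, (phi M k₁ k₂ j l)^2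
      = (∑ j ∈ Finset.range M, (sf M k₁ j)^2) * (∑ l ∈ Finset.range M, (sf M k₂ l)^2) := by
  unfold phi; rw [sum_sq_split]

lemma E_II (M k₁ k₂ : ℕ) :
    ∑ l ∈ Finset.range M, ∑ j ∈ Finset.range M, (phi M k₁ k₂ (M-1-j) l)^2
      = (∑ j ∈ Finset.range M, (sf M k₁ j)^2) * (∑ l ∈ Finset.range M, (sf M k₂ l)^2) := by
  unfold phi
  rw [sum_sq_split M M (fun j => sf M k₁ (M-1-j)) (fun l => sf M k₂ l), reflect_sq]

lemma E_I (M k₁ k₂ : ℕ) :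
    ∑ l ∈ Finset.range M, ∑ j ∈ Finset.range M, (phi M k₁ k₂ l (M-1-j))^2
      = (∑ j ∈ Finset.range M, (sf M k₁ j)^2) * (∑ l ∈ Finset.range M, (sf M k₂ l)^2) := by
  unfold phi
  have h : ∀ l j : ℕ, (sf M k₁ l * sf M k₂ (M-1-j))^2 = (sf M k₂ (M-1-j) * sf M k₁ l)^2 := by
    intro l j; ring
  simp only [h]
  rw [sum_sq_split M M (fun j => sf M k₂ (M-1-j)) (fun l => sf M k₁ l), reflect_sq]
  ring

lemma E_IV (M k₁ k₂ : ℕ) :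
    ∑ l ∈ Finset.range M, ∑ j ∈ Finset.range M, (phi M k₁ k₂ (M-1-l) (M-1-j))^2
      = (∑ j ∈ Finset.range M, (sf M k₁ j)^2) * (∑ l ∈ Finset.range M, (sf M k₂ l)^2) := by
  unfold phi
  have h : ∀ l j : ℕ, (sf M k₁ (M-1-l) * sf M k₂ (M-1-j))^2
      = (sf M k₂ (M-1-j) * sf M k₁ (M-1-l))^2 := by intro l j; ring
  simp only [h]
  rw [sum_sq_split M M (fun j => sf M k₂ (M-1-j)) (fun l => sf M k₁ (M-1-l)), reflect_sq,
    reflect_sq]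
  ring

lemma P_III (M k₁ k₂ : ℕ) :
    ∑ l ∈ Finset.range M, ∑ j ∈ Finset.range (M-1), phi M k₁ k₂ j l * phi M k₁ k₂ (j+1) l
      = (∑ j ∈ Finset.range (M-1), sf M k₁ j * sf M k₁ (j+1))
        * (∑ l ∈ Finset.range M, (sf M k₂ l)^2) := by
  unfold phi; rw [sum_prod_split]

lemma P_II (M k₁ k₂ : ℕ) :
    ∑ l ∈ Finset.range M, ∑ j ∈ Finset.range (M-1),
        phi M k₁ k₂ (M-1-j) l * phi M k₁ k₂ (M-1-(j+1)) l
      = (∑ j ∈ Finset.range (M-1), sf M k₁ j * sf M k₁ (j+1))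
        * (∑ l ∈ Finset.range M, (sf M k₂ l)^2) := by
  unfold phi
  rw [sum_prod_split (M-1) M (fun j => sf M k₁ (M-1-j)) (fun j => sf M k₁ (M-1-(j+1)))
    (fun l => sf M k₂ l), reflect_prod]

lemma P_I (M k₁ k₂ : ℕ) :
    ∑ l ∈ Finset.range M, ∑ j ∈ Finset.range (M-1),
        phi M k₁ k₂ l (M-1-j) * phi M k₁ k₂ l (M-1-(j+1))
      = (∑ j ∈ Finset.range (M-1), sf M k₂ j * sf M k₂ (j+1))
        * (∑ l ∈ Finset.range M, (sf M k₁ l)^2) := by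
  unfold phi
  have h : ∀ l j : ℕ, (sf M k₁ l * sf M k₂ (M-1-j)) * (sf M k₁ l * sf M k₂ (M-1-(j+1)))
      = (sf M k₂ (M-1-j) * sf M k₁ l) * (sf M k₂ (M-1-(j+1)) * sf M k₁ l) := by
    intro l j; ring
  simp only [h]
  rw [sum_prod_split (M-1) M (fun j => sf M k₂ (M-1-j)) (fun j => sf M k₂ (M-1-(j+1)))
    (fun l => sf M k₁ l), reflect_prod]

lemma P_IV (M k₁ k₂ : ℕ) :
    ∑ l ∈ Finset.range M, ∑ j ∈ Finset.range (M-1),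
        phi M k₁ k₂ (M-1-l) (M-1-j) * phi M k₁ k₂ (M-1-l) (M-1-(j+1))
      = (∑ j ∈ Finset.range (M-1), sf M k₂ j * sf M k₂ (j+1))
        * (∑ l ∈ Finset.range M, (sf M k₁ l)^2) := by
  unfold phi
  have h : ∀ l j : ℕ,
      (sf M k₁ (M-1-l) * sf M k₂ (M-1-j)) * (sf M k₁ (M-1-l) * sf M k₂ (M-1-(j+1)))
      = (sf M k₂ (M-1-j) * sf M k₁ (M-1-l)) * (sf M k₂ (M-1-(j+1)) * sf M k₁ (M-1-l)) := by
    intro l j; ring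
  simp only [h]
  rw [sum_prod_split (M-1) M (fun j => sf M k₂ (M-1-j)) (fun j => sf M k₂ (M-1-(j+1)))
    (fun l => sf M k₁ (M-1-l)), reflect_prod, reflect_sq]


lemma normSqQuad_eq (M : ℕ) (hM : 1 ≤ M) (f : Fin (2*M) → Fin (2*M) → ℝ)
    (w c : ℕ → ℕ → ℝ) (hf : extend (2*M) f = gB M w c) :
    normSqQuad (2*M) f
      = ((w 0 0 + w 0 1)^2 + (w 1 0 + w 1 1)^2 + (w 0 0 + w 1 1)^2 + (w 1 0)^2 + (w 0 1)^2)
          * (∑ l ∈ Finset.range M, ∑ j ∈ Finset.range M, (c j l)^2)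
        + 2 * (w 0 1) * (w 1 0) *
          (∑ l ∈ Finset.range M, ∑ j ∈ Finset.range (M-1), c j l * c (j+1) l) := by
  unfold normSqQuad
  rw [hf]
  exact quadNorm_gB M hM w c

lemma half_cos (M k : ℕ) :
    Real.cos ((k:ℝ)*Real.pi/((M:ℝ)+1))
      = 2*Real.cos ((k:ℝ)*Real.pi/(((2*M:ℕ):ℝ)+2))^2 - 1 := by
  have hx : (k:ℝ)*Real.pi/((M:ℝ)+1) = 2*((k:ℝ)*Real.pi/(((2*M:ℕ):ℝ)+2)) := by
    push_cast
    have h1 : (M:ℝ)+1 ≠ 0 := by positivity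
    have h2 : 2*(M:ℝ)+2 ≠ 0 := by positivity
    field_simp
  rw [hx, Real.cos_two_mul]

lemma half_sin (M k : ℕ) :
    Real.cos ((k:ℝ)*Real.pi/((M:ℝ)+1))
      = 1 - 2*Real.sin ((k:ℝ)*Real.pi/(((2*M:ℕ):ℝ)+2))^2 := by
  rw [half_cos M k]
  have := Real.sin_sq_add_cos_sq ((k:ℝ)*Real.pi/(((2*M:ℕ):ℝ)+2))
  linarith

/-- The level-one full ADRT acts on the block-sinusoidal images `v^{(p)}_{(k₁,k₂)}`
with the singular values of `S_{(1)}`. -/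
theorem adrt_level_one_singular_values (n N M k₁ k₂ : ℕ) (p : Fin 4)
    (hn : 1 ≤ n) (hN : N = 2 ^ n) (hM : N = 2 * M)
    (hk₁ : 1 ≤ k₁) (hk₁' : k₁ ≤ M) (hk₂ : 1 ≤ k₂) (hk₂' : k₂ ≤ M) :
    ((p = 0 ∨ p = 2) →
      normSqFull N (vpk N M p k₁ k₂)
        = (8 + 2 * Real.cos ((k₁ : ℝ) * Real.pi / ((N : ℝ) + 2)) ^ 2
             + 2 * Real.cos ((k₂ : ℝ) * Real.pi / ((N : ℝ) + 2)) ^ 2) *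
            ∑ i₁ : Fin N, ∑ i₂ : Fin N, (vpk N M p k₁ k₂ i₁ i₂) ^ 2) ∧
    ((p = 1 ∨ p = 3) →
      normSqFull N (vpk N M p k₁ k₂)
        = (4 + 2 * Real.sin ((k₁ : ℝ) * Real.pi / ((N : ℝ) + 2)) ^ 2
             + 2 * Real.sin ((k₂ : ℝ) * Real.pi / ((N : ℝ) + 2)) ^ 2) *
            ∑ i₁ : Fin N, ∑ i₂ : Fin N, (vpk N M p k₁ k₂ i₁ i₂) ^ 2) := by
  subst hM
  have hM1 : 1 ≤ M := by
    have h2 : 2 ≤ 2^n := by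
      calc (2:ℕ) = 2^1 := by norm_num
      _ ≤ 2^n := Nat.pow_le_pow_right (by norm_num) hn
    omega
  have hQ3 := normSqQuad_eq M hM1 _ _ _ (extend_TIII M p k₁ k₂)
  have hQ2 := normSqQuad_eq M hM1 _ _ _ (extend_TII M p k₁ k₂)
  have hQ1 := normSqQuad_eq M hM1 _ _ _ (extend_TI M p k₁ k₂)
  have hQ4 := normSqQuad_eq M hM1 _ _ _ (extend_TIV M p k₁ k₂)
  rw [E_III, P_III] at hQ3
  rw [E_II, P_II] at hQ2
  rw [E_I, P_I] at hQ1
  rw [E_IV, P_IV] at hQ4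
  rw [trig_sum M k₁ hM1] at hQ3 hQ2
  rw [trig_sum M k₂ hM1] at hQ1 hQ4
  rw [half_cos M k₁] at hQ3 hQ2
  rw [half_cos M k₂] at hQ1 hQ4
  constructor
  · intro hp
    unfold normSqFull
    rw [hQ1, hQ2, hQ3, hQ4, vpk_norm M p k₁ k₂]
    rcases hp with hp | hp <;> subst hp <;> simp [blockPat] <;> ring
  · intro hp
    unfold normSqFull
    rw [hQ1, hQ2, hQ3, hQ4, vpk_norm M p k₁ k₂]
    rw [show (2:ℝ)*Real.cos ((k₁:ℝ)*Real.pi/(((2*M:ℕ):ℝ)+2))^2 - 1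
        = 1 - 2*Real.sin ((k₁:ℝ)*Real.pi/(((2*M:ℕ):ℝ)+2))^2 from by
      rw [← half_cos M k₁, half_sin M k₁]]
    rw [show (2:ℝ)*Real.cos ((k₂:ℝ)*Real.pi/(((2*M:ℕ):ℝ)+2))^2 - 1
        = 1 - 2*Real.sin ((k₂:ℝ)*Real.pi/(((2*M:ℕ):ℝ)+2))^2 from by
      rw [← half_cos M k₂, half_sin M k₂]]
    rcases hp with hp | hp <;> subst hp <;> simp [blockPat] <;> ring
end

section
/- Let n ≥ 1, N = 2^n, M = N/2. The level-one full ADRT S_{(1)}, which maps an image f ∈ ℝ^{N×N} to the quadruple (S(T_I f), S(T_II f), S(T_III f), S(T_IV f)), is an injective linear map; that is, if S(T_q f) = 0 for all q ∈ {I,II,III,IV}, then f = 0. Consequently, for any b in the range of S_{(1)}, the equation S_{(1)} x = b has a unique solution x ∈ ℝ^{N×N}. -/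
open Real

lemma adrtS_sub (u v : ℤ → ℤ → ℝ) (h s : ℤ) :
    adrtS (fun a b => u a b - v a b) h s = adrtS u h s - adrtS v h s := by
  unfold adrtS; split <;> ring

lemma extend_sub (N : ℕ) (f g : Fin N → Fin N → ℝ) (i j : ℤ) :
    extend N (f - g) i j = extend N f i j - extend N g i j := by
  unfold extend
  split
  · simp
  · simp

lemma adrt_key (N : ℕ) (f : Fin N → Fin N → ℝ)
    (hS : ∀ h s : ℤ, adrtS (extend N f) h s = 0) :
    ∀ h s : ℤ, extend N f h s = 0 := by
  set g := extend N f with hg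
  have hout : ∀ h s : ℤ, (N : ℤ) ≤ h → g h s = 0 := by
    intro h s hh
    rw [hg]
    unfold extend
    rw [dif_neg (by omega)]
  have step : ∀ h : ℤ, (∀ s, g (h + 1) s = 0) → ∀ s, g h s = 0 := by
    intro h ih
    have heven : ∀ s : ℤ, s % 2 = 0 → g h s = 0 := by
      intro s hs
      have h1 := hS h (s + 1)
      simp only [adrtS] at h1
      rw [if_neg (by omega)] at h1
      have h2 : s + 1 - 1 = s := by ring
      rw [h2, ih] at h1
      linarith
    intro s
    rcases Int.emod_two_eq_zero_or_one s with hs | hs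
    · exact heven s hs
    · have h1 := hS h (s - 1)
      simp only [adrtS] at h1
      rw [if_pos (by omega)] at h1
      have h2 : s - 1 + 1 = s := by ring
      rw [h2, heven (s - 1) (by omega)] at h1
      linarith
  have main : ∀ m : ℕ, ∀ h : ℤ, (N : ℤ) - m ≤ h → ∀ s, g h s = 0 := by
    intro m
    induction m with
    | zero => intro h hh s; exact hout h s (by omega)
    | succ k ih =>
      intro h hh s
      by_cases hc : (N : ℤ) - k ≤ h
      · exact ih h hc s
      · exact step h (fun s => ih (h + 1) (by omega) s) s
  intro h s
  exact main ((N : ℤ) - h).toNat h (by omega) s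

lemma adrt_inj_aux (N : ℕ) (f g : Fin N → Fin N → ℝ)
    (h3 : adrtS (extend N f) = adrtS (extend N g)) : f = g := by
  have hz : ∀ h s : ℤ, adrtS (extend N (f - g)) h s = 0 := by
    intro h s
    have he : extend N (f - g) = fun a b => extend N f a b - extend N g a b := by
      funext a b; exact extend_sub N f g a b
    rw [he, adrtS_sub, h3]
    ring
  have hk := adrt_key N (f - g) hz
  funext a b
  have h1 := hk (a : ℤ) (b : ℤ)
  unfold extend at h1
  rw [dif_pos ⟨Int.ofNat_nonneg _, by exact_mod_cast a.isLt,
    Int.ofNat_nonneg _, by exact_mod_cast b.isLt⟩] at h1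
  simp only [Int.toNat_natCast, Pi.sub_apply, Fin.eta] at h1
  linarith

/-- The level-one full ADRT `S_{(1)}` is injective, and consequently
`S_{(1)} x = b` has a unique solution for every `b` in the range of `S_{(1)}`. -/
theorem adrt_level_one_injective (n N : ℕ) (hn : 1 ≤ n) (hN : N = 2 ^ n) :
    Function.Injective (fun f : Fin N → Fin N → ℝ =>
      (adrtS (extend N (TI N f)), adrtS (extend N (TII N f)),
       adrtS (extend N (TIII N f)), adrtS (extend N (TIV N f)))) ∧
    ∀ b ∈ Set.range (fun f : Fin N → Fin N → ℝ =>
      (adrtS (extend N (TI N f)), adrtS (extend N (TII N f)),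
       adrtS (extend N (TIII N f)), adrtS (extend N (TIV N f)))),
      ∃! x : Fin N → Fin N → ℝ,
        (adrtS (extend N (TI N x)), adrtS (extend N (TII N x)),
         adrtS (extend N (TIII N x)), adrtS (extend N (TIV N x))) = b := by

  have hinj : Function.Injective (fun f : Fin N → Fin N → ℝ =>
      (adrtS (extend N (TI N f)), adrtS (extend N (TII N f)),
       adrtS (extend N (TIII N f)), adrtS (extend N (TIV N f)))) := by
    intro f g hfg
    simp only [Prod.mk.injEq] at hfg
    exact adrt_inj_aux N f g hfg.2.2.1
  refine ⟨hinj, ?_⟩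
  rintro b ⟨f, rfl⟩
  exact ⟨f, rfl, fun y hy => hinj hy⟩
end
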